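/- arXiv:0804.4525 — 8 statements merged into one kernel-verified Lean document; each statement's English description precedes it below -/
import Mathlib

section
/- Let G = ((V,E), v_in, AP, L) be a labeled graph with n = |V| vertices and let 0 ≤ m ≤ |AP|. If there exists a path ω from v_in with |L(ω)| ≥ m, then there exists a path ω' from v_in with |L(ω' ↾ m·n)| ≥ m, i.e., ω' already visits at least m distinct atomic propositions among its first m·n + 1 vertices. -/
/-- A path in a labeled graph: an infinite sequence of vertices starting at `v0`
and following the edge relation `E`. -/
def IsPath {V : Type*} (E : V → V → Prop) (v0 : V) (ω : ℕ → V) : Prop :=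
  ω 0 = v0 ∧ ∀ i, E (ω i) (ω (i + 1))

open Classical in
/-- Shortcut lemma: if a path first hits a "new label" vertex at index `i`, there is a
path from the same start hitting a new-label vertex at some index `< card V`, whose total
label union still covers the old one modulo `U`. -/
private lemma shortcut_aux {V AP : Type*} [Fintype V] [Fintype AP]
    (E : V → V → Prop) (L : V → Set AP) (U : Set AP) :
    ∀ i (v : V) (σ : ℕ → V), IsPath E v σ → (∀ t < i, L (σ t) ⊆ U) →
    ¬ L (σ i) ⊆ U →
    ∃ (σ' : ℕ → V) (k : ℕ), IsPath E v σ' ∧ k < Fintype.card V ∧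
      ¬ L (σ' k) ⊆ U ∧ (⋃ t, L (σ t)) ⊆ U ∪ ⋃ t, L (σ' t) := by
  intro i
  induction i using Nat.strong_induction_on with
  | _ i ih =>
    intro v σ hσ hmin hi
    by_cases hcase : i < Fintype.card V
    · exact ⟨σ, i, hσ, hcase, hi, fun x hx => Or.inr hx⟩
    · push_neg at hcase
      obtain ⟨a₀, b₀, hab₀, heq₀⟩ :=
        Fintype.exists_ne_map_eq_of_card_lt
          (fun t : Fin (Fintype.card V + 1) => σ t) (by simp)
      -- get a < b ≤ card V with σ a = σ b
      obtain ⟨a, b, hab, hble, heq⟩ : ∃ a b : ℕ, a < b ∧ b ≤ Fintype.card V ∧ σ a = σ b := by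
        rcases lt_or_gt_of_ne hab₀ with h | h
        · exact ⟨a₀, b₀, h, Nat.lt_succ_iff.mp b₀.isLt, heq₀⟩
        · exact ⟨b₀, a₀, h, Nat.lt_succ_iff.mp a₀.isLt, heq₀.symm⟩
      have hbi : b ≤ i := le_trans hble hcase
      set d := b - a with hd
      have hd1 : 1 ≤ d := by omega
      set σ₂ : ℕ → V := fun t => if t ≤ a then σ t else σ (t + d) with hσ₂
      have hσ₂eq : ∀ t, a < t → σ₂ t = σ (t + d) := by
        intro t ht; simp [hσ₂, Nat.not_le.mpr ht]
      have hσ₂eq' : ∀ t, t ≤ a → σ₂ t = σ t := by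
        intro t ht; simp [hσ₂, ht]
      have hpath₂ : IsPath E v σ₂ := by
        constructor
        · rw [hσ₂eq' 0 (Nat.zero_le a)]; exact hσ.1
        · intro t
          rcases lt_trichotomy t a with h | h | h
          · rw [hσ₂eq' t (le_of_lt h), hσ₂eq' (t+1) h]; exact hσ.2 t
          · subst h
            rw [hσ₂eq' t le_rfl, hσ₂eq (t+1) (Nat.lt_succ_self t)]
            have : t + 1 + d = b + 1 := by omega
            rw [this, heq]
            exact hσ.2 b
          · rw [hσ₂eq t h, hσ₂eq (t+1) (lt_trans h (Nat.lt_succ_self t))]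
            have : t + 1 + d = (t + d) + 1 := by omega
            rw [this]
            exact hσ.2 (t + d)
      set i' := i - d with hi'
      have hii' : i' + d = i := by omega
      have hσ₂i' : σ₂ i' = σ i := by
        by_cases h : i' ≤ a
        · have : i = b := by omega
          have : i' = a := by omega
          rw [hσ₂eq' i' (by omega)]
          rw [this, heq]
          congr 1
          omega
        · rw [hσ₂eq i' (by omega), hii']
      have hmin₂ : ∀ t < i', L (σ₂ t) ⊆ U := by
        intro t ht
        by_cases h : t ≤ a
        · rw [hσ₂eq' t h]; exact hmin t (by omega)
        · rw [hσ₂eq t (by omega)]; exact hmin (t + d) (by omega)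
      have hi₂ : ¬ L (σ₂ i') ⊆ U := by rw [hσ₂i']; exact hi
      have hlt : i' < i := by omega
      obtain ⟨σ', k, hp, hk, hnk, hsub⟩ := ih i' hlt v σ₂ hpath₂ hmin₂ hi₂
      refine ⟨σ', k, hp, hk, hnk, ?_⟩
      intro x hx
      simp only [Set.mem_iUnion] at hx
      obtain ⟨t, hxt⟩ := hx
      rcases le_or_gt t a with h | h
      · exact hsub (Set.mem_iUnion.mpr ⟨t, by rwa [hσ₂eq' t h]⟩)
      · rcases lt_or_ge t b with h2 | h2
        · exact Or.inl (hmin t (by omega) hxt)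
        · have : σ₂ (t - d) = σ t := by
            by_cases h3 : t - d ≤ a
            · have : t = b := by omega
              rw [hσ₂eq' _ h3]
              have ha : t - d = a := by omega
              rw [ha, heq, this]
            · rw [hσ₂eq _ (by omega)]
              congr 1
              omega
          exact hsub (Set.mem_iUnion.mpr ⟨t - d, by rwa [this]⟩)

open Classical in
private lemma extend_aux {V AP : Type*} [Fintype V] [Fintype AP]
    (E : V → V → Prop) (vin : V) (L : V → Set AP) (m : ℕ) :
    ∀ j (ω : ℕ → V) (k : ℕ), IsPath E vin ω →
      m ≤ (⋃ i, L (ω i)).ncard →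
      m ≤ (⋃ i ∈ Set.Iic k, L (ω i)).ncard + j →
      ∃ ω', IsPath E vin ω' ∧
        m ≤ (⋃ i ∈ Set.Iic (k + j * Fintype.card V), L (ω' i)).ncard := by
  intro j
  induction j with
  | zero =>
    intro ω k hω _ hpre
    exact ⟨ω, hω, by simpa using hpre⟩
  | succ j ihj =>
    intro ω k hω hcov hpre
    set U := ⋃ i ∈ Set.Iic k, L (ω i) with hU
    by_cases hdone : m ≤ U.ncard
    · refine ⟨ω, hω, le_trans hdone (Set.ncard_le_ncard ?_ (Set.toFinite _))⟩
      exact Set.biUnion_subset_biUnion_left (Set.Iic_subset_Iic.mpr (Nat.le_add_right _ _))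
    · push_neg at hdone
      -- there exists an index where a new label appears
      have hex : ∃ t, ¬ L (ω t) ⊆ U := by
        by_contra h
        push_neg at h
        have : (⋃ i, L (ω i)) ⊆ U := Set.iUnion_subset h
        have := Set.ncard_le_ncard this (Set.toFinite _)
        omega
      set t₀ := Nat.find hex with ht₀
      have ht₀spec : ¬ L (ω t₀) ⊆ U := Nat.find_spec hex
      have ht₀min : ∀ t < t₀, L (ω t) ⊆ U := fun t ht => by
        by_contra h; exact Nat.find_min hex ht h
      have hkt₀ : k < t₀ := by
        by_contra h
        push_neg at h
        exact ht₀spec (Set.subset_biUnion_of_mem (u := fun i => L (ω i)) (Set.mem_Iic.mpr h))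
      set σ : ℕ → V := fun s => ω (k + s) with hσdef
      have hσpath : IsPath E (ω k) σ := ⟨by simp [hσdef], fun s => by
        have := hω.2 (k + s); simpa [hσdef, Nat.add_assoc] using this⟩
      have hσmin : ∀ s < t₀ - k, L (σ s) ⊆ U := by
        intro s hs
        exact ht₀min (k + s) (by omega)
      have hσhit : ¬ L (σ (t₀ - k)) ⊆ U := by
        have : k + (t₀ - k) = t₀ := by omega
        simpa [hσdef, this] using ht₀spec
      obtain ⟨σ', k', hp', hk', hnk', hsub'⟩ :=
        shortcut_aux E L U (t₀ - k) (ω k) σ hσpath hσmin hσhit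
      -- glue
      set ω₂ : ℕ → V := fun t => if t ≤ k then ω t else σ' (t - k) with hω₂
      have hω₂le : ∀ t, t ≤ k → ω₂ t = ω t := fun t ht => by simp [hω₂, ht]
      have hω₂gt : ∀ t, k < t → ω₂ t = σ' (t - k) := fun t ht => by
        simp [hω₂, Nat.not_le.mpr ht]
      have hω₂k : ∀ s, ω₂ (k + s) = σ' s := by
        intro s
        cases s with
        | zero => rw [hω₂le _ (by omega)]; simpa using hp'.1.symm
        | succ s => rw [hω₂gt _ (by omega)]; congr 1; omega
      have hω₂path : IsPath E vin ω₂ := by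
        constructor
        · rw [hω₂le 0 (Nat.zero_le k)]; exact hω.1
        · intro t
          rcases lt_trichotomy t k with h | h | h
          · rw [hω₂le t (le_of_lt h), hω₂le (t+1) h]; exact hω.2 t
          · subst h
            rw [show t + 1 = t + 1 by rfl]
            have h1 : ω₂ t = σ' 0 := by simpa using hω₂k 0
            have h2 : ω₂ (t + 1) = σ' 1 := by simpa using hω₂k 1
            rw [h1, h2]; exact hp'.2 0
          · rw [hω₂gt t h, hω₂gt (t+1) (by omega)]
            have : t + 1 - k = (t - k) + 1 := by omega
            rw [this]; exact hp'.2 (t - k)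
      -- k' ≥ 1
      have hk'1 : 1 ≤ k' := by
        rcases Nat.eq_zero_or_pos k' with h | h
        · exfalso
          apply hnk'
          rw [h, hp'.1]
          exact Set.subset_biUnion_of_mem (u := fun i => L (ω i)) (Set.mem_Iic.mpr le_rfl)
        · exact h
      -- total coverage of ω₂
      have hcov₂ : m ≤ (⋃ i, L (ω₂ i)).ncard := by
        refine le_trans hcov (Set.ncard_le_ncard ?_ (Set.toFinite _))
        intro x hx
        simp only [Set.mem_iUnion] at hx ⊢
        obtain ⟨t, hxt⟩ := hx
        rcases le_or_gt t k with h | h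
        · exact ⟨t, by rwa [hω₂le t h]⟩
        · have hxσ : x ∈ ⋃ s, L (σ s) := by
            refine Set.mem_iUnion.mpr ⟨t - k, ?_⟩
            have : k + (t - k) = t := by omega
            simpa [hσdef, this] using hxt
          rcases hsub' hxσ with hxU | hxσ'
          · rw [hU] at hxU
            simp only [Set.mem_iUnion] at hxU
            obtain ⟨i, hi, hxi⟩ := hxU
            exact ⟨i, by rwa [hω₂le i hi]⟩
          · simp only [Set.mem_iUnion] at hxσ'
            obtain ⟨s, hxs⟩ := hxσ'
            exact ⟨k + s, by rwa [hω₂k s]⟩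
      -- prefix of ω₂ up to k + k' has at least U.ncard + 1 elements
      obtain ⟨x, hxL, hxU⟩ := Set.not_subset.mp hnk'
      have hUsub : insert x U ⊆ ⋃ i ∈ Set.Iic (k + k'), L (ω₂ i) := by
        intro y hy
        rcases hy with rfl | hyU
        · refine Set.mem_biUnion (Set.mem_Iic.mpr le_rfl) ?_
          rwa [hω₂k k']
        · rw [hU] at hyU
          simp only [Set.mem_iUnion] at hyU
          obtain ⟨i, hi, hyi⟩ := hyU
          have hik : i ≤ k := Set.mem_Iic.mp hi
          refine Set.mem_biUnion (Set.mem_Iic.mpr (by omega : i ≤ k + k')) ?_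
          rwa [hω₂le i hik]
      have hpre₂ : m ≤ (⋃ i ∈ Set.Iic (k + k'), L (ω₂ i)).ncard + j := by
        have h1 : (insert x U).ncard = U.ncard + 1 :=
          Set.ncard_insert_of_notMem hxU (Set.toFinite _)
        have h2 : (insert x U).ncard ≤ (⋃ i ∈ Set.Iic (k + k'), L (ω₂ i)).ncard :=
          Set.ncard_le_ncard hUsub (Set.toFinite _)
        omega
      obtain ⟨ω', hω', hfin⟩ := ihj ω₂ (k + k') hω₂path hcov₂ hpre₂
      refine ⟨ω', hω', le_trans hfin (Set.ncard_le_ncard ?_ (Set.toFinite _))⟩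
      refine Set.biUnion_subset_biUnion_left (Set.Iic_subset_Iic.mpr ?_)
      have : k' ≤ Fintype.card V := le_of_lt hk'
      calc k + k' + j * Fintype.card V ≤ k + Fintype.card V + j * Fintype.card V := by omega
        _ = k + (j + 1) * Fintype.card V := by ring

/-- Let `G = ((V,E), v_in, AP, L)` be a labeled graph with `n = |V|` vertices and
`0 ≤ m ≤ |AP|`.  If there exists a path `ω` from `v_in` with `|L(ω)| ≥ m`, then
there exists a path `ω'` from `v_in` with `|L(ω' ↾ m·n)| ≥ m`, i.e. `ω'` already
visits at least `m` distinct atomic propositions among its first `m·n + 1` vertices. -/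
theorem maximal_coverage_short_witness
    {V AP : Type*} [Fintype V] [Fintype AP]
    (E : V → V → Prop) (hE : ∀ v, ∃ u, E v u)
    (vin : V) (L : V → Set AP)
    (m : ℕ) (hm : m ≤ Fintype.card AP)
    (ω : ℕ → V) (hω : IsPath E vin ω)
    (hcov : m ≤ (⋃ i : ℕ, L (ω i)).ncard) :
    ∃ ω' : ℕ → V, IsPath E vin ω' ∧
      m ≤ (⋃ i ∈ Set.Iic (m * Fintype.card V), L (ω' i)).ncard := by
  obtain ⟨ω', h1, h2⟩ := extend_aux E vin L m m ω 0 hω hcov (Nat.le_add_left m _)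
  exact ⟨ω', h1, by simpa using h2⟩
end

section
/- Let G = ((V,E), v_in, AP, L) be a labeled graph with n = |V| vertices, let 0 ≤ m ≤ |AP| and k ≥ 0. If there exists a path ω from v_in with |L(ω ↾ k)| ≥ m, then there exists a path ω' from v_in with |L(ω' ↾ min(k, m·n))| ≥ m. -/
private lemma union_mono {V AP : Type*} (L : V → Set AP) (ω : ℕ → V) {k₁ k₂ : ℕ}
    (h : k₁ ≤ k₂) :
    (⋃ i ∈ Set.Iic k₁, L (ω i)) ⊆ ⋃ i ∈ Set.Iic k₂, L (ω i) :=
  Set.biUnion_subset_biUnion_left (Set.Iic_subset_Iic.2 h)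

/-- Let `G = ((V,E), v_in, AP, L)` be a labeled graph with `n = |V|` vertices,
`0 ≤ m ≤ |AP|` and `k ≥ 0`.  If there exists a path `ω` from `v_in` with
`|L(ω ↾ k)| ≥ m`, then there exists a path `ω'` from `v_in` with
`|L(ω' ↾ min(k, m·n))| ≥ m`. -/
theorem bounded_coverage_short_witness
    {V AP : Type*} [Fintype V] [Fintype AP]
    (E : V → V → Prop) (hE : ∀ v, ∃ u, E v u)
    (vin : V) (L : V → Set AP)
    (m : ℕ) (hm : m ≤ Fintype.card AP) (k : ℕ)
    (ω : ℕ → V) (hω : IsPath E vin ω)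
    (hcov : m ≤ (⋃ i ∈ Set.Iic k, L (ω i)).ncard) :
    ∃ ω' : ℕ → V, IsPath E vin ω' ∧
      m ≤ (⋃ i ∈ Set.Iic (min k (m * Fintype.card V)), L (ω' i)).ncard := by
  induction k using Nat.strong_induction_on generalizing ω with
  | _ k IH =>
  by_cases hk : k ≤ m * Fintype.card V
  · exact ⟨ω, hω, by rwa [min_eq_left hk]⟩
  · push_neg at hk
    by_cases h1 : ∃ k' < k, m ≤ (⋃ i ∈ Set.Iic k', L (ω i)).ncard
    · obtain ⟨k', hk', hc⟩ := h1
      obtain ⟨ω', hω', hc'⟩ := IH k' hk' ω hω hc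
      exact ⟨ω', hω', hc'.trans (Set.ncard_le_ncard
        (union_mono L ω' (min_le_min hk'.le le_rfl)) (Set.toFinite _))⟩
    · push_neg at h1
      by_cases h2 : ∃ a b, a < b ∧ b ≤ k ∧ ω a = ω b ∧
          (⋃ i ∈ Set.Iic a, L (ω i)) = (⋃ i ∈ Set.Iic b, L (ω i))
      · obtain ⟨a, b, hab, hbk, hv, hS⟩ := h2
        set d := b - a with hd
        have hd1 : 1 ≤ d := Nat.le_sub_of_add_le (by omega)
        have hadb : a + d = b := by omega
        set ω₂ : ℕ → V := fun i => if i ≤ a then ω i else ω (i + d) with hω₂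
        have hpath₂ : IsPath E vin ω₂ := by
          constructor
          · simp only [hω₂, if_pos (Nat.zero_le a)]
            exact hω.1
          · intro i
            rcases lt_trichotomy i a with h | h | h
            · have h1' : i + 1 ≤ a := h
              simp only [hω₂, if_pos h.le, if_pos h1']
              exact hω.2 i
            · subst h
              have h2' : ¬ (i + 1 ≤ i) := by omega
              simp only [hω₂, if_pos (le_refl i), if_neg h2']
              have : i + 1 + d = b + 1 := by omega
              rw [this, hv]
              exact hω.2 b
            · have h1' : ¬ (i ≤ a) := by omega
              have h2' : ¬ (i + 1 ≤ a) := by omega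
              simp only [hω₂, if_neg h1', if_neg h2']
              have : i + d + 1 = i + 1 + d := by omega
              rw [show i + 1 + d = i + d + 1 by omega]
              exact hω.2 (i + d)
        have hsub : (⋃ i ∈ Set.Iic k, L (ω i)) ⊆ ⋃ i ∈ Set.Iic (k - d), L (ω₂ i) := by
          intro x hx
          simp only [Set.mem_iUnion, Set.mem_Iic, exists_prop] at hx ⊢
          obtain ⟨j, hj, hxj⟩ := hx
          by_cases hjb : j ≤ b
          · have hxb : x ∈ ⋃ i ∈ Set.Iic b, L (ω i) := by
              simp only [Set.mem_iUnion, Set.mem_Iic, exists_prop]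
              exact ⟨j, hjb, hxj⟩
            rw [← hS] at hxb
            simp only [Set.mem_iUnion, Set.mem_Iic, exists_prop] at hxb
            obtain ⟨j', hj', hxj'⟩ := hxb
            refine ⟨j', by omega, ?_⟩
            simp only [hω₂, if_pos hj']
            exact hxj'
          · refine ⟨j - d, by omega, ?_⟩
            have : ¬ (j - d ≤ a) := by omega
            simp only [hω₂, if_neg this]
            rw [show j - d + d = j by omega]
            exact hxj
        have hcov₂ : m ≤ (⋃ i ∈ Set.Iic (k - d), L (ω₂ i)).ncard :=
          hcov.trans (Set.ncard_le_ncard hsub (Set.toFinite _))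
        have hkd : k - d < k := Nat.sub_lt (by omega) hd1
        obtain ⟨ω', hω', hc'⟩ := IH (k - d) hkd ω₂ hpath₂ hcov₂
        exact ⟨ω', hω', hc'.trans (Set.ncard_le_ncard
          (union_mono L ω' (min_le_min (Nat.sub_le k d) le_rfl)) (Set.toFinite _))⟩
      · push_neg at h2
        exfalso
        have hcount : k ≤ Fintype.card V * m := by
          have hmem : ∀ i ∈ Finset.range k,
              (ω i, (⋃ j ∈ Set.Iic i, L (ω j)).ncard) ∈
                (Finset.univ ×ˢ Finset.range m) := by
            intro i hi
            simp only [Finset.mem_product, Finset.mem_univ, Finset.mem_range, true_and]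
            exact h1 i (Finset.mem_range.1 hi)
          have hinj : Set.InjOn (fun i => (ω i, (⋃ j ∈ Set.Iic i, L (ω j)).ncard))
              (Finset.range k) := by
            intro i hi j hj hij
            simp only [Prod.mk.injEq] at hij
            by_contra hne
            rcases lt_or_gt_of_ne hne with h | h
            · exact h2 i j h (by simpa using Nat.le_of_lt (Finset.mem_range.1 hj))
                hij.1 (Set.eq_of_subset_of_ncard_le (union_mono L ω h.le) hij.2.ge
                  (Set.toFinite _))
            · exact h2 j i h (by simpa using Nat.le_of_lt (Finset.mem_range.1 hi))
                hij.1.symm (Set.eq_of_subset_of_ncard_le (union_mono L ω h.le) hij.2.le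
                  (Set.toFinite _))
          have := Finset.card_le_card_of_injOn _ hmem hinj
          simpa [Finset.card_product] using this
        rw [mul_comm] at hcount
        omega
end

section
/- For every path ω in G^Φ starting from x_1, there exists a truth assignment A : {x_1,...,x_n} → {true,false} such that the number of clauses of Φ satisfied by A is at least |L(ω)| − 1. -/
/-- Vertices of the graph `G^Φ` for a CNF formula `Φ` with `n` variables and `m`
clauses: the variable vertices `x_1, …, x_n`, the absorbing vertex `x_{n+1}`
(`sink`), and vertices `x_{j,i}` (`pos j i`) and `x̄_{j,i}` (`neg j i`). -/
inductive PhiVtx (n m : ℕ) where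
  | var : Fin n → PhiVtx n m
  | sink : PhiVtx n m
  | pos : Fin n → Fin m → PhiVtx n m
  | neg : Fin n → Fin m → PhiVtx n m

/-- The vertex following the chain of clause vertices for variable `x_j`:
the next variable vertex `x_{j+1}`, or the absorbing vertex `x_{n+1}` if `j = n`. -/
def nextVar {n m : ℕ} (j : Fin n) : PhiVtx n m :=
  if h : (j : ℕ) + 1 < n then .var ⟨(j : ℕ) + 1, h⟩ else .sink

/-- The edge relation of `G^Φ`, where `T j` (resp. `F j`) is the (nonempty) set of
indices of clauses containing the literal `x_j` (resp. `¬x_j`): a self-loop at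
`x_{n+1}`; from `x_j` edges to `x_{j,min(T j)}` and `x̄_{j,min(F j)}`; from `x_{j,i}`
(with `i` not maximal in `T j`) an edge to `x_{j,i'}` for the next larger `i' ∈ T j`;
from `x_{j,max(T j)}` an edge to the next variable vertex; and symmetrically for the
`x̄_{j,i}` vertices along `F j`. -/
inductive PhiEdge {n m : ℕ} (T F : Fin n → Finset (Fin m))
    (hT : ∀ j, (T j).Nonempty) (hF : ∀ j, (F j).Nonempty) :
    PhiVtx n m → PhiVtx n m → Prop where
  | sink : PhiEdge T F hT hF .sink .sink
  | varPos (j : Fin n) : PhiEdge T F hT hF (.var j) (.pos j ((T j).min' (hT j)))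
  | varNeg (j : Fin n) : PhiEdge T F hT hF (.var j) (.neg j ((F j).min' (hF j)))
  | posStep (j : Fin n) (i i' : Fin m) (h1 : i ∈ T j) (h2 : i' ∈ T j) (h3 : i < i')
      (h4 : ∀ l ∈ T j, i < l → i' ≤ l) : PhiEdge T F hT hF (.pos j i) (.pos j i')
  | posEnd (j : Fin n) : PhiEdge T F hT hF (.pos j ((T j).max' (hT j))) (nextVar j)
  | negStep (j : Fin n) (i i' : Fin m) (h1 : i ∈ F j) (h2 : i' ∈ F j) (h3 : i < i')
      (h4 : ∀ l ∈ F j, i < l → i' ≤ l) : PhiEdge T F hT hF (.neg j i) (.neg j i')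
  | negEnd (j : Fin n) : PhiEdge T F hT hF (.neg j ((F j).max' (hF j))) (nextVar j)

/-- The labeling of `G^Φ`.  The set of atomic propositions is
`AP = {C_1, …, C_m, X}`, encoded as `Option (Fin m)` with `some i = C_i` and
`none = X`: variable vertices and `x_{n+1}` are labeled `{X}`, and the vertices
`x_{j,i}`, `x̄_{j,i}` are labeled `{C_i}`. -/
def PhiL {n m : ℕ} : PhiVtx n m → Set (Option (Fin m))
  | .var _ => {none}
  | .sink => {none}
  | .pos _ i => {some i}
  | .neg _ i => {some i}

/-- The assignment `A` satisfies clause `C_i`, where `T j` (resp. `F j`) is the set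
of clauses containing `x_j` positively (resp. negatively). -/
def SatClause {n m : ℕ} (T F : Fin n → Finset (Fin m)) (A : Fin n → Bool)
    (i : Fin m) : Prop :=
  ∃ j : Fin n, (i ∈ T j ∧ A j = true) ∨ (i ∈ F j ∧ A j = false)

open Classical in
noncomputable def lvl {n m : ℕ} : PhiVtx n m → ℕ
  | .var j => j
  | .sink => n
  | .pos j _ => j
  | .neg j _ => j

lemma lvl_nextVar {n m : ℕ} (j : Fin n) : (j : ℕ) < lvl (nextVar (m := m) j) := by
  unfold nextVar
  split
  · simp [lvl]
  · simp only [lvl]; exact j.isLt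

lemma lvl_mono {n m : ℕ} {T F : Fin n → Finset (Fin m)} {hT hF} {u v : PhiVtx n m}
    (h : PhiEdge T F hT hF u v) : lvl u ≤ lvl v := by
  cases h with
  | sink => exact le_refl _
  | varPos j => exact le_refl _
  | varNeg j => exact le_refl _
  | posStep j i i' h1 h2 h3 h4 => exact le_refl _
  | posEnd j => exact le_of_lt (lvl_nextVar j)
  | negStep j i i' h1 h2 h3 h4 => exact le_refl _
  | negEnd j => exact le_of_lt (lvl_nextVar j)

lemma nextVar_ne_pos {n m : ℕ} (j j' : Fin n) (i : Fin m) :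
    nextVar j ≠ PhiVtx.pos j' i := by
  unfold nextVar; split <;> simp

lemma nextVar_ne_neg {n m : ℕ} (j j' : Fin n) (i : Fin m) :
    nextVar j ≠ PhiVtx.neg j' i := by
  unfold nextVar; split <;> simp

lemma edge_pos_inv {n m : ℕ} {T F : Fin n → Finset (Fin m)} {hT hF} {u v : PhiVtx n m}
    (he : PhiEdge T F hT hF u v) (j : Fin n) (i : Fin m) (hv : v = .pos j i) :
    i ∈ T j := by
  cases he with
  | sink => simp at hv
  | varPos j' => injection hv with h1 h2; subst h1; subst h2; exact Finset.min'_mem _ _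
  | varNeg j' => simp at hv
  | posStep j' i0 i1 h1 h2 h3 h4 => injection hv with e1 e2; subst e1; subst e2; exact h2
  | posEnd j' => exact absurd hv (nextVar_ne_pos _ _ _)
  | negStep j' i0 i1 h1 h2 h3 h4 => simp at hv
  | negEnd j' => exact absurd hv (nextVar_ne_pos _ _ _)

lemma edge_neg_inv {n m : ℕ} {T F : Fin n → Finset (Fin m)} {hT hF} {u v : PhiVtx n m}
    (he : PhiEdge T F hT hF u v) (j : Fin n) (i : Fin m) (hv : v = .neg j i) :
    i ∈ F j := by
  cases he with
  | sink => simp at hv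
  | varNeg j' => injection hv with h1 h2; subst h1; subst h2; exact Finset.min'_mem _ _
  | varPos j' => simp at hv
  | negStep j' i0 i1 h1 h2 h3 h4 => injection hv with e1 e2; subst e1; subst e2; exact h2
  | posEnd j' => exact absurd hv (nextVar_ne_neg _ _ _)
  | posStep j' i0 i1 h1 h2 h3 h4 => simp at hv
  | negEnd j' => exact absurd hv (nextVar_ne_neg _ _ _)

lemma edge_pos_next {n m : ℕ} {T F : Fin n → Finset (Fin m)} {hT hF} {u v : PhiVtx n m}
    (he : PhiEdge T F hT hF u v) (j : Fin n) (i : Fin m) (hu : u = .pos j i) :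
    (∃ i', v = .pos j i') ∨ (j : ℕ) < lvl v := by
  cases he with
  | sink => simp at hu
  | varPos j' => simp at hu
  | varNeg j' => simp at hu
  | posStep j' i0 i1 h1 h2 h3 h4 =>
    injection hu with e1 e2; subst e1; exact Or.inl ⟨i1, rfl⟩
  | posEnd j' =>
    injection hu with e1 e2; subst e1; exact Or.inr (lvl_nextVar _)
  | negStep j' i0 i1 h1 h2 h3 h4 => simp at hu
  | negEnd j' => simp at hu

lemma edge_neg_next {n m : ℕ} {T F : Fin n → Finset (Fin m)} {hT hF} {u v : PhiVtx n m}
    (he : PhiEdge T F hT hF u v) (j : Fin n) (i : Fin m) (hu : u = .neg j i) :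
    (∃ i', v = .neg j i') ∨ (j : ℕ) < lvl v := by
  cases he with
  | sink => simp at hu
  | varPos j' => simp at hu
  | varNeg j' => simp at hu
  | negStep j' i0 i1 h1 h2 h3 h4 =>
    injection hu with e1 e2; subst e1; exact Or.inl ⟨i1, rfl⟩
  | negEnd j' =>
    injection hu with e1 e2; subst e1; exact Or.inr (lvl_nextVar _)
  | posStep j' i0 i1 h1 h2 h3 h4 => simp at hu
  | posEnd j' => simp at hu

section Main
variable {n m : ℕ} {T F : Fin n → Finset (Fin m)} {hT : ∀ j, (T j).Nonempty}
  {hF : ∀ j, (F j).Nonempty} {hn : 0 < n} {ω : ℕ → PhiVtx n m}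
  (hω : IsPath (PhiEdge T F hT hF) (.var ⟨0, hn⟩) ω)

include hω

lemma pos_mem (k : ℕ) (j : Fin n) (i : Fin m) (h : ω k = .pos j i) : i ∈ T j := by
  cases k with
  | zero => rw [hω.1] at h; exact absurd h (by simp)
  | succ k => exact edge_pos_inv (hω.2 k) j i h

lemma neg_mem (k : ℕ) (j : Fin n) (i : Fin m) (h : ω k = .neg j i) : i ∈ F j := by
  cases k with
  | zero => rw [hω.1] at h; exact absurd h (by simp)
  | succ k => exact edge_neg_inv (hω.2 k) j i h

lemma pos_persist (a : ℕ) (j : Fin n) (i : Fin m) (h : ω a = .pos j i) :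
    ∀ b, a ≤ b → (∃ i', ω b = .pos j i') ∨ (j : ℕ) < lvl (ω b) := by
  intro b hb
  induction b, hb using Nat.le_induction with
  | base => exact Or.inl ⟨i, h⟩
  | succ b hb ih =>
    rcases ih with ⟨i', hb'⟩ | hlvl
    · exact edge_pos_next (hω.2 b) j i' hb'
    · exact Or.inr (lt_of_lt_of_le hlvl (lvl_mono (hω.2 b)))

lemma neg_persist (a : ℕ) (j : Fin n) (i : Fin m) (h : ω a = .neg j i) :
    ∀ b, a ≤ b → (∃ i', ω b = .neg j i') ∨ (j : ℕ) < lvl (ω b) := by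
  intro b hb
  induction b, hb using Nat.le_induction with
  | base => exact Or.inl ⟨i, h⟩
  | succ b hb ih =>
    rcases ih with ⟨i', hb'⟩ | hlvl
    · exact edge_neg_next (hω.2 b) j i' hb'
    · exact Or.inr (lt_of_lt_of_le hlvl (lvl_mono (hω.2 b)))

lemma no_both (a b : ℕ) (j : Fin n) (i i' : Fin m)
    (ha : ω a = .pos j i) (hb : ω b = .neg j i') : False := by
  rcases le_total a b with hab | hab
  · rcases pos_persist hω a j i ha b hab with ⟨i'', h⟩ | h
    · rw [hb] at h; simp at h
    · rw [hb] at h; simp [lvl] at h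
  · rcases neg_persist hω b j i' hb a hab with ⟨i'', h⟩ | h
    · rw [ha] at h; simp at h
    · rw [ha] at h; simp [lvl] at h

end Main

/-- For every path `ω` in `G^Φ` starting from `x_1`, there exists a truth assignment
`A : {x_1,…,x_n} → {true, false}` such that the number of clauses of `Φ` satisfied by
`A` is at least `|L(ω)| − 1`. -/
theorem path_to_assignment
    {n m : ℕ} (hn : 0 < n)
    (T F : Fin n → Finset (Fin m))
    (hT : ∀ j, (T j).Nonempty) (hF : ∀ j, (F j).Nonempty)
    (ω : ℕ → PhiVtx n m)
    (hω : IsPath (PhiEdge T F hT hF) (.var ⟨0, hn⟩) ω) :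
    ∃ A : Fin n → Bool,
      (⋃ i : ℕ, PhiL (ω i)).ncard - 1 ≤ {i : Fin m | SatClause T F A i}.ncard := by
  classical
  set A : Fin n → Bool := fun j => decide (∃ k i, ω k = PhiVtx.pos j i) with hA
  refine ⟨A, ?_⟩
  set S : Set (Fin m) := {i : Fin m | SatClause T F A i} with hS
  have hsub : (⋃ i : ℕ, PhiL (ω i)) ⊆ insert none (Option.some '' S) := by
    rintro x hx
    simp only [Set.mem_iUnion] at hx
    obtain ⟨k, hk⟩ := hx
    rcases hv : ω k with j | _ | ⟨j, i⟩ | ⟨j, i⟩ <;> rw [hv] at hk <;>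
      simp only [PhiL, Set.mem_singleton_iff] at hk <;> rw [hk]
    · exact Set.mem_insert _ _
    · exact Set.mem_insert _ _
    · refine Set.mem_insert_of_mem _ ⟨i, ?_, rfl⟩
      refine ⟨j, Or.inl ⟨pos_mem hω k j i hv, ?_⟩⟩
      simp [hA]
      exact ⟨k, i, hv⟩
    · refine Set.mem_insert_of_mem _ ⟨i, ?_, rfl⟩
      refine ⟨j, Or.inr ⟨neg_mem hω k j i hv, ?_⟩⟩
      simp only [hA, decide_eq_false_iff_not]
      rintro ⟨k', i', hk'⟩
      exact no_both hω k' k j i' i hk' hv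
  calc (⋃ i : ℕ, PhiL (ω i)).ncard - 1
      ≤ (insert none (Option.some '' S)).ncard - 1 :=
        Nat.sub_le_sub_right (Set.ncard_le_ncard hsub (Set.toFinite _)) 1
    _ ≤ (Option.some '' S).ncard + 1 - 1 :=
        Nat.sub_le_sub_right (Set.ncard_insert_le _ _) 1
    _ = (Option.some '' S).ncard := Nat.add_sub_cancel _ _
    _ = S.ncard := Set.ncard_image_of_injective _ (Option.some_injective _)
end

section
/- For every truth assignment A : {x_1,...,x_n} → {true,false} that satisfies at least r clauses of Φ, there exists a path ω in G^Φ starting from x_1 with |L(ω)| ≥ r + 1. -/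
section Aux
variable {n m : ℕ} (T F : Fin n → Finset (Fin m)) (hT : ∀ j, (T j).Nonempty)
  (hF : ∀ j, (F j).Nonempty) (A : Fin n → Bool)

def phiStep : PhiVtx n m → PhiVtx n m
  | .var j => if A j then .pos j ((T j).min' (hT j)) else .neg j ((F j).min' (hF j))
  | .sink => .sink
  | .pos j i =>
      if h : ((T j).filter (fun l => i < l)).Nonempty then
        .pos j (((T j).filter (fun l => i < l)).min' h)
      else nextVar j
  | .neg j i =>
      if h : ((F j).filter (fun l => i < l)).Nonempty then
        .neg j (((F j).filter (fun l => i < l)).min' h)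
      else nextVar j

def PhiGood : PhiVtx n m → Prop
  | .pos j i => i ∈ T j
  | .neg j i => i ∈ F j
  | _ => True

lemma chain_reach {m : ℕ} (P : Fin m → Prop) (s : Finset (Fin m)) (hs : s.Nonempty)
    (h0 : P (s.min' hs))
    (hstep : ∀ i ∈ s, ∀ h : (s.filter (fun l => i < l)).Nonempty,
      P i → P ((s.filter (fun l => i < l)).min' h)) :
    ∀ i ∈ s, P i := by
  suffices h : ∀ c, ∀ i ∈ s, (s.filter (fun l => l < i)).card = c → P i by
    intro i hi; exact h _ i hi rfl
  intro c
  induction c using Nat.strong_induction_on with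
  | _ c ih =>
    intro i hi hc
    rcases Nat.eq_zero_or_pos c with h0c | hpos
    · have hemp : (s.filter (fun l => l < i)) = ∅ := by
        subst h0c; exact Finset.card_eq_zero.mp hc
      have : i = s.min' hs := by
        refine le_antisymm ?_ (s.min'_le i hi)
        by_contra hlt
        have : s.min' hs ∈ s.filter (fun l => l < i) :=
          Finset.mem_filter.mpr ⟨s.min'_mem hs, lt_of_not_ge hlt⟩
        simp [hemp] at this
      rw [this]; exact h0
    · have hne : (s.filter (fun l => l < i)).Nonempty :=
        Finset.card_pos.mp (hc ▸ hpos)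
      set p := (s.filter (fun l => l < i)).max' hne with hp
      have hpmem := (s.filter (fun l => l < i)).max'_mem hne
      rw [Finset.mem_filter] at hpmem
      have hps : p ∈ s := hpmem.1
      have hpi : p < i := hpmem.2
      have hne2 : (s.filter (fun l => p < l)).Nonempty :=
        ⟨i, Finset.mem_filter.mpr ⟨hi, hpi⟩⟩
      have hmin : (s.filter (fun l => p < l)).min' hne2 = i := by
        refine le_antisymm (Finset.min'_le _ i (Finset.mem_filter.mpr ⟨hi, hpi⟩)) ?_
        by_contra hlt
        have hm := (s.filter (fun l => p < l)).min'_mem hne2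
        rw [Finset.mem_filter] at hm
        have : (s.filter (fun l => p < l)).min' hne2 ∈ s.filter (fun l => l < i) :=
          Finset.mem_filter.mpr ⟨hm.1, lt_of_not_ge hlt⟩
        have := Finset.le_max' _ _ this
        exact absurd (lt_of_lt_of_le hm.2 this) (lt_irrefl p)
      have hsub : (s.filter (fun l => l < p)) ⊂ (s.filter (fun l => l < i)) := by
        constructor
        · intro l hl
          rw [Finset.mem_filter] at hl ⊢
          exact ⟨hl.1, hl.2.trans hpi⟩
        · intro hcon
          have : p ∈ s.filter (fun l => l < p) := hcon (Finset.mem_filter.mpr ⟨hps, hpi⟩)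
          simp at this
      have hcard : (s.filter (fun l => l < p)).card < c := hc ▸ Finset.card_lt_card hsub
      have hPp := ih _ hcard p hps rfl
      have := hstep p hps hne2 hPp
      rwa [hmin] at this

lemma phiStep_edge : ∀ v, PhiGood T F v →
    PhiEdge T F hT hF v (phiStep T F hT hF A v) ∧ PhiGood T F (phiStep T F hT hF A v) := by
  have goodNext : ∀ j : Fin n, PhiGood T F (nextVar (m := m) j) := by
    intro j; unfold nextVar; split <;> trivial
  intro v hv
  cases v with
  | var j =>
      simp only [phiStep]
      split
      · exact ⟨.varPos j, (T j).min'_mem (hT j)⟩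
      · exact ⟨.varNeg j, (F j).min'_mem (hF j)⟩
  | sink => exact ⟨.sink, trivial⟩
  | pos j i =>
      simp only [PhiGood] at hv
      simp only [phiStep]
      split
      · next h =>
          have hm := ((T j).filter (fun l => i < l)).min'_mem h
          rw [Finset.mem_filter] at hm
          refine ⟨.posStep j i _ hv hm.1 hm.2 ?_, hm.1⟩
          intro l hl hil
          exact Finset.min'_le _ l (Finset.mem_filter.mpr ⟨hl, hil⟩)
      · next h =>
          have himax : i = (T j).max' (hT j) := by
            refine le_antisymm (Finset.le_max' _ _ hv) ?_
            by_contra hlt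
            exact h ⟨(T j).max' (hT j),
              Finset.mem_filter.mpr ⟨(T j).max'_mem (hT j), lt_of_not_ge hlt⟩⟩
          refine ⟨?_, goodNext j⟩
          rw [himax]; exact .posEnd j
  | neg j i =>
      simp only [PhiGood] at hv
      simp only [phiStep]
      split
      · next h =>
          have hm := ((F j).filter (fun l => i < l)).min'_mem h
          rw [Finset.mem_filter] at hm
          refine ⟨.negStep j i _ hv hm.1 hm.2 ?_, hm.1⟩
          intro l hl hil
          exact Finset.min'_le _ l (Finset.mem_filter.mpr ⟨hl, hil⟩)
      · next h =>
          have himax : i = (F j).max' (hF j) := by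
            refine le_antisymm (Finset.le_max' _ _ hv) ?_
            by_contra hlt
            exact h ⟨(F j).max' (hF j),
              Finset.mem_filter.mpr ⟨(F j).max'_mem (hF j), lt_of_not_ge hlt⟩⟩
          refine ⟨?_, goodNext j⟩
          rw [himax]; exact .negEnd j
end Aux

/-- For every truth assignment `A : {x_1,…,x_n} → {true, false}` that satisfies at
least `r` clauses of `Φ`, there exists a path `ω` in `G^Φ` starting from `x_1` with
`|L(ω)| ≥ r + 1`. -/
theorem assignment_to_path
    {n m : ℕ} (hn : 0 < n)
    (T F : Fin n → Finset (Fin m))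
    (hT : ∀ j, (T j).Nonempty) (hF : ∀ j, (F j).Nonempty)
    (A : Fin n → Bool) (r : ℕ)
    (hA : r ≤ {i : Fin m | SatClause T F A i}.ncard) :
    ∃ ω : ℕ → PhiVtx n m, IsPath (PhiEdge T F hT hF) (.var ⟨0, hn⟩) ω ∧
      r + 1 ≤ (⋃ i : ℕ, PhiL (ω i)).ncard := by
  classical
  set f := phiStep T F hT hF A with hfdef
  set v0 : PhiVtx n m := .var ⟨0, hn⟩ with hv0
  set ω : ℕ → PhiVtx n m := fun k => f^[k] v0 with hω
  have hgood : ∀ k, PhiGood T F (ω k) := by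
    intro k
    induction k with
    | zero => trivial
    | succ k ih =>
        have : ω (k+1) = f (ω k) := Function.iterate_succ_apply' f k v0
        rw [this]
        exact (phiStep_edge T F hT hF A (ω k) ih).2
  have hpath : IsPath (PhiEdge T F hT hF) v0 ω := by
    refine ⟨rfl, fun k => ?_⟩
    have : ω (k+1) = f (ω k) := Function.iterate_succ_apply' f k v0
    rw [this]
    exact (phiStep_edge T F hT hF A (ω k) (hgood k)).1
  -- reachability
  set R : PhiVtx n m → Prop := fun v => ∃ k, ω k = v with hR
  have hRstep : ∀ v, R v → PhiGood T F v → R (f v) := by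
    rintro v ⟨k, hk⟩ _
    exact ⟨k+1, by rw [show ω (k+1) = f (ω k) from Function.iterate_succ_apply' f k v0, hk]⟩
  have hRgood : ∀ v, R v → PhiGood T F v := by
    rintro v ⟨k, hk⟩; rw [← hk]; exact hgood k
  have hRposAll : ∀ j : Fin n, A j = true → R (.var j) → ∀ i ∈ T j, R (.pos j i) := by
    intro j hAj hRv
    refine chain_reach _ (T j) (hT j) ?_ ?_
    · have := hRstep _ hRv trivial
      rwa [show f (.var j) = .pos j ((T j).min' (hT j)) by
        simp [hfdef, phiStep, hAj]] at this
    · intro i hi h hRi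
      have := hRstep _ hRi hi
      rwa [show f (.pos j i) = .pos j (((T j).filter (fun l => i < l)).min' h) by
        simp [hfdef, phiStep, h]] at this
  have hRnegAll : ∀ j : Fin n, A j = false → R (.var j) → ∀ i ∈ F j, R (.neg j i) := by
    intro j hAj hRv
    refine chain_reach _ (F j) (hF j) ?_ ?_
    · have := hRstep _ hRv trivial
      rwa [show f (.var j) = .neg j ((F j).min' (hF j)) by
        simp [hfdef, phiStep, hAj]] at this
    · intro i hi h hRi
      have := hRstep _ hRi hi
      rwa [show f (.neg j i) = .neg j (((F j).filter (fun l => i < l)).min' h) by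
        simp [hfdef, phiStep, h]] at this
  have hRnext : ∀ j : Fin n, R (.var j) → R (nextVar j) := by
    intro j hRv
    cases hAj : A j with
    | true =>
        have hmax := hRposAll j hAj hRv ((T j).max' (hT j)) ((T j).max'_mem (hT j))
        have := hRstep _ hmax ((T j).max'_mem (hT j))
        rwa [show f (.pos j ((T j).max' (hT j))) = nextVar j by
          have hemp : ¬ ((T j).filter (fun l => (T j).max' (hT j) < l)).Nonempty := by
            rintro ⟨l, hl⟩
            rw [Finset.mem_filter] at hl
            exact absurd hl.2 (not_lt.mpr (Finset.le_max' _ _ hl.1))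
          simp only [hfdef, phiStep]
          rw [dif_neg hemp]] at this
    | false =>
        have hmax := hRnegAll j hAj hRv ((F j).max' (hF j)) ((F j).max'_mem (hF j))
        have := hRstep _ hmax ((F j).max'_mem (hF j))
        rwa [show f (.neg j ((F j).max' (hF j))) = nextVar j by
          have hemp : ¬ ((F j).filter (fun l => (F j).max' (hF j) < l)).Nonempty := by
            rintro ⟨l, hl⟩
            rw [Finset.mem_filter] at hl
            exact absurd hl.2 (not_lt.mpr (Finset.le_max' _ _ hl.1))
          simp only [hfdef, phiStep]
          rw [dif_neg hemp]] at this
  have hRvar : ∀ j : Fin n, R (.var j) := by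
    intro j
    obtain ⟨v, hv⟩ := j
    induction v with
    | zero => exact ⟨0, rfl⟩
    | succ v ih =>
        have hvn : v < n := Nat.lt_of_succ_lt hv
        have := hRnext ⟨v, hvn⟩ (ih hvn)
        rwa [show nextVar (m := m) ⟨v, hvn⟩ = .var ⟨v+1, hv⟩ by simp [nextVar, hv]] at this
  -- cardinality
  refine ⟨ω, hpath, ?_⟩
  set U : Set (Option (Fin m)) := ⋃ i : ℕ, PhiL (ω i) with hU
  set S : Set (Fin m) := {i : Fin m | SatClause T F A i} with hS
  have hsub : insert none (some '' S) ⊆ U := by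
    rintro x hx
    rcases hx with rfl | ⟨i, hi, rfl⟩
    · exact Set.mem_iUnion.mpr ⟨0, by simp [hω, hv0, PhiL]⟩
    · obtain ⟨j, hj⟩ := hi
      rcases hj with ⟨hij, hAj⟩ | ⟨hij, hAj⟩
      · obtain ⟨k, hk⟩ := hRposAll j hAj (hRvar j) i hij
        exact Set.mem_iUnion.mpr ⟨k, by rw [hk]; simp [PhiL]⟩
      · obtain ⟨k, hk⟩ := hRnegAll j hAj (hRvar j) i hij
        exact Set.mem_iUnion.mpr ⟨k, by rw [hk]; simp [PhiL]⟩
  have hcard : (insert none (some '' S)).ncard = S.ncard + 1 := by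
    rw [Set.ncard_insert_of_notMem (by simp), Set.ncard_image_of_injective _ (Option.some_injective _)]
  calc r + 1 ≤ S.ncard + 1 := by omega
    _ = (insert none (some '' S)).ncard := hcard.symm
    _ ≤ U.ncard := Set.ncard_le_ncard hsub (Set.toFinite U)
end

section
/- Let G = ((V,E), v_in, AP, L) be a labeled graph that is controllably recurrent and let 0 ≤ m ≤ |AP|. Then there exists a path ω from v_in with |L(ω)| ≥ m if and only if |⋃{L(v) : v reachable from v_in}| ≥ m. -/
/-!
Every path stays among the vertices reachable from `v_in`, so it collects no more labels than
they carry. Conversely, recurrence lets us walk from `v_in` to any reachable vertex and back,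
so finitely many such round trips form a closed walk at `v_in` through every reachable vertex;
repeating it forever is a path whose labels are those of all reachable vertices.
-/

open Relation

section Walks

variable {V : Type*} {E : V → V → Prop}

/-- A walk of length `n` from `a` to `b`, read off the values `f 0, …, f n`; the rest of `f` is
irrelevant. -/
structure IsWalk (E : V → V → Prop) (a b : V) (n : ℕ) (f : ℕ → V) : Prop where
  start : f 0 = a
  finish : f n = b
  step : ∀ i < n, E (f i) (f (i + 1))

def walkAppend (f : ℕ → V) (n : ℕ) (g : ℕ → V) : ℕ → V :=
  fun i => if i < n then f i else g (i - n)

lemma walkAppend_of_lt {f g : ℕ → V} {n i : ℕ} (h : i < n) : walkAppend f n g i = f i :=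
  if_pos h

lemma walkAppend_add (f g : ℕ → V) (n j : ℕ) : walkAppend f n g (n + j) = g j := by
  simp [walkAppend]

namespace IsWalk

lemma single {a b : V} (h : E a b) : IsWalk E a b 1 (fun i => if i = 0 then a else b) :=
  ⟨rfl, rfl, fun i hi => by simpa [Nat.lt_one_iff.mp hi] using h⟩

lemma append_apply_of_le {a b c : V} {n m i : ℕ} {f g : ℕ → V} (hf : IsWalk E a b n f)
    (hg : IsWalk E b c m g) (hi : i ≤ n) : walkAppend f n g i = f i := by
  rcases hi.lt_or_eq with hi | rfl
  · exact walkAppend_of_lt hi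
  · simpa [hg.start, hf.finish] using walkAppend_add f g i 0

lemma append {a b c : V} {n m : ℕ} {f g : ℕ → V} (hf : IsWalk E a b n f)
    (hg : IsWalk E b c m g) : IsWalk E a c (n + m) (walkAppend f n g) := by
  refine ⟨by rw [hf.append_apply_of_le hg n.zero_le, hf.start], by rw [walkAppend_add, hg.finish],
    fun i hi => ?_⟩
  rcases Nat.lt_or_ge i n with h | h
  · rw [hf.append_apply_of_le hg h.le, hf.append_apply_of_le hg h]
    exact hf.step i h
  · obtain ⟨j, rfl⟩ := Nat.exists_eq_add_of_le h
    rw [walkAppend_add, add_assoc, walkAppend_add]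
    exact hg.step j (by omega)

lemma isPath_mod {v : V} {n : ℕ} {f : ℕ → V} (hf : IsWalk E v v n f) (hn : 0 < n) :
    IsPath E v (fun i => f (i % n)) := by
  refine ⟨by simp [hf.start], fun i => ?_⟩
  have hi := Nat.mod_lt i hn
  dsimp only
  rw [← Nat.mod_add_mod]
  rcases (Nat.add_one_le_of_lt hi).lt_or_eq with h | h
  · rw [Nat.mod_eq_of_lt h]
    exact hf.step _ hi
  · have hlast := hf.step _ hi
    rw [h, Nat.mod_self, hf.start]
    rwa [h, hf.finish] at hlast

end IsWalk

lemma Relation.ReflTransGen.exists_isWalk {a b : V} (h : ReflTransGen E a b) :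
    ∃ n f, IsWalk E a b n f := by
  induction h with
  | refl => exact ⟨0, fun _ => a, rfl, rfl, by simp⟩
  | tail _ hbc ih =>
    obtain ⟨n, f, hf⟩ := ih
    exact ⟨n + 1, _, hf.append (.single hbc)⟩

lemma IsPath.range_subset_reachable {v : V} {ω : ℕ → V} (hω : IsPath E v ω) :
    Set.range ω ⊆ {u | ReflTransGen E v u} := by
  rintro _ ⟨i, rfl⟩
  induction i with
  | zero => exact hω.1 ▸ ReflTransGen.refl
  | succ i ih => exact ReflTransGen.tail ih (hω.2 i)

end Walks

section Recurrent

variable {V : Type*} {E : V → V → Prop} {v : V}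

lemma exists_closed_walk_visiting (hv : ∃ w, E v w)
    (hcr : ∀ u, ReflTransGen E v u → ReflTransGen E u v) {s : Set V} (hs : s.Finite)
    (hreach : s ⊆ {u | ReflTransGen E v u}) :
    ∃ n f, 0 < n ∧ IsWalk E v v n f ∧ ∀ u ∈ s, ∃ j ≤ n, f j = u := by
  induction s, hs using Set.Finite.induction_on with
  | empty =>
    obtain ⟨w, hw⟩ := hv
    obtain ⟨k, g, hg⟩ := (hcr w (.single hw)).exists_isWalk
    exact ⟨1 + k, _, by omega, (IsWalk.single hw).append hg, by simp⟩
  | @insert u s _ _ ih =>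
    obtain ⟨n, f, hn, hf, hfs⟩ := ih ((Set.subset_insert u s).trans hreach)
    have hu : ReflTransGen E v u := hreach (Set.mem_insert u s)
    obtain ⟨k, g, hg⟩ := hu.exists_isWalk
    obtain ⟨k', g', hg'⟩ := (hcr u hu).exists_isWalk
    have hround := hg.append hg'
    refine ⟨k + k' + n, _, by omega, hround.append hf, ?_⟩
    rintro x (rfl | hx)
    · refine ⟨k, by omega, ?_⟩
      rw [hround.append_apply_of_le hf (by omega), hg.append_apply_of_le hg' le_rfl, hg.finish]
    · obtain ⟨j, hj, rfl⟩ := hfs x hx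
      exact ⟨k + k' + j, by omega, walkAppend_add _ _ _ _⟩

lemma exists_isPath_range_superset (hv : ∃ w, E v w)
    (hcr : ∀ u, ReflTransGen E v u → ReflTransGen E u v) {s : Set V} (hs : s.Finite)
    (hreach : s ⊆ {u | ReflTransGen E v u}) :
    ∃ ω, IsPath E v ω ∧ s ⊆ Set.range ω := by
  obtain ⟨n, f, hn, hf, hfs⟩ := exists_closed_walk_visiting hv hcr hs hreach
  refine ⟨_, hf.isPath_mod hn, fun u hu => ?_⟩
  obtain ⟨j, hj, rfl⟩ := hfs u hu
  rcases hj.lt_or_eq with hj | rfl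
  · exact ⟨j, by simp [Nat.mod_eq_of_lt hj]⟩
  · exact ⟨0, by simp [hf.start, hf.finish]⟩

end Recurrent

theorem controllably_recurrent_maximal_coverage_general
    {V AP : Type*} [Fintype V] [Fintype AP]
    (E : V → V → Prop) (hE : ∀ v, ∃ u, E v u)
    (vin : V) (L : V → Set AP)
    (hcr : ∀ u, Relation.ReflTransGen E vin u → Relation.ReflTransGen E u vin)
    (m : ℕ) :
    (∃ ω : ℕ → V, IsPath E vin ω ∧ m ≤ (⋃ i : ℕ, L (ω i)).ncard) ↔
      m ≤ (⋃ u ∈ {u | Relation.ReflTransGen E vin u}, L u).ncard := by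
  constructor
  · rintro ⟨ω, hω, hm⟩
    rw [← Set.biUnion_range] at hm
    exact hm.trans <| Set.ncard_le_ncard
      (Set.biUnion_subset_biUnion_left hω.range_subset_reachable) (Set.toFinite _)
  · intro hm
    obtain ⟨ω, hω, hrange⟩ :=
      exists_isPath_range_superset (hE vin) hcr (Set.toFinite _) subset_rfl
    refine ⟨ω, hω, hm.trans ?_⟩
    rw [← Set.biUnion_range]
    exact Set.ncard_le_ncard (Set.biUnion_subset_biUnion_left hrange) (Set.toFinite _)

/-- Let `G = ((V,E), v_in, AP, L)` be a labeled graph that is controllably recurrent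
and `0 ≤ m ≤ |AP|`.  Then there exists a path `ω` from `v_in` with `|L(ω)| ≥ m` if
and only if `|⋃ {L(v) : v reachable from v_in}| ≥ m`. -/
theorem controllably_recurrent_maximal_coverage
    {V AP : Type*} [Fintype V] [Fintype AP]
    (E : V → V → Prop) (hE : ∀ v, ∃ u, E v u)
    (vin : V) (L : V → Set AP)
    (hcr : ∀ u, Relation.ReflTransGen E vin u → Relation.ReflTransGen E u vin)
    (m : ℕ) (hm : m ≤ Fintype.card AP) :
    (∃ ω : ℕ → V, IsPath E vin ω ∧ m ≤ (⋃ i : ℕ, L (ω i)).ncard) ↔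
      m ≤ (⋃ u ∈ {u | Relation.ReflTransGen E vin u}, L u).ncard :=
  controllably_recurrent_maximal_coverage_general E hE vin L hcr m
end

section
/- Let G = ((V,E),(V_1,V_2), v_in, AP, L) be a labeled game graph with n = |V| vertices and let 0 ≤ m ≤ |AP|. If there exists a player-1 strategy π_1 such that for every player-2 strategy π_2, |L(ω(v_in,π_1,π_2))| ≥ m, then there exists a player-1 strategy π_1' such that for every player-2 strategy π_2, |L(ω(v_in,π_1',π_2) ↾ m·n)| ≥ m, i.e., at least m distinct propositions are visited within the first m·n steps of the play. -/
/-!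
Induct on the number `t` of labels still missing: if player 1 can force at least `k` labels to
be seen on top of an already collected set `S`, with `k ≤ |S| + t`, then she can force this
within `t·n` steps. When `|S| < k`, let `T` be the set of vertices `u` with a label outside `S`
from which this is still forcible. Along a winning play, the first vertex with a new label lies
in `T`; hence player 2 cannot keep the play outside the player-1 attractor of `T`. That
attractor stabilises after `n` rounds, so player 1 reaches some `u ∈ T` within `n` steps and
continues with `S ∪ L u`, which leaves at most `t - 1` labels missing.
-/

/-- `π` is a valid strategy for the player owning the vertices satisfying `owns`:
for every history `w` and current vertex `v` owned by the player, the chosen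
successor `π w v` is along an edge of the game graph. -/
def IsStrat {V : Type*} (E : V → V → Prop) (owns : V → Prop)
    (π : List V → V → V) : Prop :=
  ∀ (w : List V) (v : V), owns v → E v (π w v)

/-- Auxiliary function computing, after `i` steps of the play from `v`, the pair
(current vertex, history of previously visited vertices).  Here `P1 v = true` means
`v` is a player-1 vertex, and `P1 v = false` that it is a player-2 vertex. -/
def playSeq {V : Type*} (P1 : V → Bool) (π1 π2 : List V → V → V) (v : V) :
    ℕ → V × List V
  | 0 => (v, [])
  | i + 1 =>
    let p := playSeq P1 π1 π2 v i
    (if P1 p.1 then π1 p.2 p.1 else π2 p.2 p.1, p.2 ++ [p.1])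

/-- The unique play `ω(v, π1, π2)`: the `i`-th vertex of the infinite play starting
at `v` in which player 1 (resp. player 2) resolves choices at vertices `u` with
`P1 u = true` (resp. `P1 u = false`) using strategy `π1` (resp. `π2`). -/
def play {V : Type*} (P1 : V → Bool) (π1 π2 : List V → V → V) (v : V) (i : ℕ) : V :=
  (playSeq P1 π1 π2 v i).1

open Set Function

section Plays

variable {V : Type*} (P1 : V → Bool)

def residualStrat (h : List V) (π : List V → V → V) : List V → V → V :=
  fun w x => π (h ++ w) x

theorem IsStrat.residual {E : V → V → Prop} {owns : V → Prop} {π : List V → V → V}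
    (hπ : IsStrat E owns π) (h : List V) : IsStrat E owns (residualStrat h π) :=
  fun w x hx => hπ (h ++ w) x hx

variable (π1 π2 : List V → V → V) (v : V)

theorem playSeq_succ (i : ℕ) :
    playSeq P1 π1 π2 v (i + 1) =
      (if P1 (playSeq P1 π1 π2 v i).1 then
          π1 (playSeq P1 π1 π2 v i).2 (playSeq P1 π1 π2 v i).1
        else π2 (playSeq P1 π1 π2 v i).2 (playSeq P1 π1 π2 v i).1,
       (playSeq P1 π1 π2 v i).2 ++ [(playSeq P1 π1 π2 v i).1]) := rfl

theorem play_succ (i : ℕ) :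
    play P1 π1 π2 v (i + 1) =
      if P1 (play P1 π1 π2 v i) then π1 (playSeq P1 π1 π2 v i).2 (play P1 π1 π2 v i)
        else π2 (playSeq P1 π1 π2 v i).2 (play P1 π1 π2 v i) := rfl

theorem length_playSeq_snd (i : ℕ) : (playSeq P1 π1 π2 v i).2.length = i := by
  induction i with
  | zero => rfl
  | succ i ih => simp [playSeq_succ, ih]

theorem headD_playSeq_snd (i : ℕ) :
    (playSeq P1 π1 π2 v i).2.headD (playSeq P1 π1 π2 v i).1 = v := by
  induction i with
  | zero => rfl
  | succ i ih =>
    refine Eq.trans ?_ ih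
    rw [playSeq_succ]
    cases (playSeq P1 π1 π2 v i).2 <;> rfl

theorem playSeq_add (i j : ℕ) :
    playSeq P1 π1 π2 v (i + j) =
      ((playSeq P1 (residualStrat (playSeq P1 π1 π2 v i).2 π1)
          (residualStrat (playSeq P1 π1 π2 v i).2 π2) (playSeq P1 π1 π2 v i).1 j).1,
        (playSeq P1 π1 π2 v i).2 ++
          (playSeq P1 (residualStrat (playSeq P1 π1 π2 v i).2 π1)
            (residualStrat (playSeq P1 π1 π2 v i).2 π2) (playSeq P1 π1 π2 v i).1 j).2) := by
  induction j with
  | zero => simp [playSeq]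
  | succ j ih =>
    rw [← add_assoc, playSeq_succ, ih, playSeq_succ]
    simp [residualStrat]

theorem play_add (i j : ℕ) :
    play P1 π1 π2 v (i + j) =
      play P1 (residualStrat (playSeq P1 π1 π2 v i).2 π1)
        (residualStrat (playSeq P1 π1 π2 v i).2 π2) (play P1 π1 π2 v i) j := by
  rw [play, playSeq_add]
  rfl

theorem playSeq_congr {π1' π2' : List V → V → V} {N : ℕ}
    (h1 : ∀ i < N, π1 (playSeq P1 π1 π2 v i).2 (playSeq P1 π1 π2 v i).1 =
      π1' (playSeq P1 π1 π2 v i).2 (playSeq P1 π1 π2 v i).1)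
    (h2 : ∀ i < N, π2 (playSeq P1 π1 π2 v i).2 (playSeq P1 π1 π2 v i).1 =
      π2' (playSeq P1 π1 π2 v i).2 (playSeq P1 π1 π2 v i).1) :
    ∀ i ≤ N, playSeq P1 π1 π2 v i = playSeq P1 π1' π2' v i := by
  intro i hi
  induction i with
  | zero => rfl
  | succ i ih =>
    rw [playSeq_succ, playSeq_succ, ← ih (by omega), h1 i (by omega), h2 i (by omega)]

theorem play_headD_strat (fam : V → List V → V → V) :
    play P1 (fun w x => fam (w.headD x) w x) π2 v = play P1 (fam v) π2 v := by
  funext i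
  refine congrArg Prod.fst (playSeq_congr P1 _ π2 v (N := i) (fun l _ => ?_)
    (fun _ _ => rfl) i le_rfl).symm
  simp only [headD_playSeq_snd]

/-- Move from `x` to `first x`, then play `fam u` where `u` is the vertex reached. -/
def prependStrat (first : V → V) (fam : V → List V → V → V) : List V → V → V
  | [], x => first x
  | _ :: w, x => fam (w.headD x) w x

theorem play_prependStrat_succ (first : V → V) (fam : V → List V → V → V) (l : ℕ) :
    play P1 (prependStrat first fam) π2 v (l + 1) =
      play P1 (fam (play P1 (prependStrat first fam) π2 v 1)) (residualStrat [v] π2)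
        (play P1 (prependStrat first fam) π2 v 1) l := by
  rw [add_comm, play_add, ← play_headD_strat]
  rfl

end Plays

theorem iterate_subset_iterate_card {V : Type*} [Fintype V] {f : Set V → Set V}
    (hf : ∀ A, A ⊆ f A) (A : Set V) (j : ℕ) : f^[j] A ⊆ f^[Fintype.card V] A := by
  have hmono : Monotone fun j => f^[j] A :=
    monotone_nat_of_le_succ fun j => by rw [iterate_succ_apply']; exact hf _
  obtain ⟨j₀, hj₀, hfix⟩ : ∃ j₀ ≤ Fintype.card V, IsFixedPt f (f^[j₀] A) := by
    by_contra! hgrow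
    have hcard : ∀ j ≤ Fintype.card V + 1, j ≤ (f^[j] A).ncard := by
      intro j hj
      induction j with
      | zero => exact Nat.zero_le _
      | succ j ih =>
        have hlt : f^[j] A ⊂ f^[j + 1] A :=
          (hmono j.le_succ).ssubset_of_ne fun h => hgrow j (by omega) <| by
            simpa [IsFixedPt, iterate_succ_apply'] using h.symm
        exact (ih (by omega)).trans_lt (ncard_lt_ncard hlt)
    have := (hcard _ le_rfl).trans (ncard_le_card _)
    rw [Nat.card_eq_fintype_card] at this
    omega
  rcases le_total j (Fintype.card V) with hj | hj
  · exact hmono hj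
  · rw [← Nat.sub_add_cancel (hj₀.trans hj), iterate_add_apply, hfix.iterate]
    exact hmono hj₀

section Game

variable {V : Type*} (E : V → V → Prop) (P1 : V → Bool)

def Forces (P : (ℕ → V) → Prop) (v : V) : Prop :=
  ∃ π1, IsStrat E (fun v => P1 v = true) π1 ∧
    ∀ π2, IsStrat E (fun v => P1 v = false) π2 → P (play P1 π1 π2 v)

variable {E P1}

theorem Forces.mono {P Q : (ℕ → V) → Prop} {v : V} (h : Forces E P1 P v)
    (hPQ : ∀ ρ, ρ 0 = v → P ρ → Q ρ) : Forces E P1 Q v :=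
  let ⟨π1, hπ1, hwin⟩ := h
  ⟨π1, hπ1, fun π2 hπ2 => hPQ _ rfl (hwin π2 hπ2)⟩

/-- Witnessed by the residual strategy of `π1` after the first `i` steps of its play
against `σ`. -/
theorem forces_of_prefix {P : (ℕ → V) → Prop} {π1 σ : List V → V → V} {v : V}
    (hπ1 : IsStrat E (fun v => P1 v = true) π1)
    (hwin : ∀ π2, IsStrat E (fun v => P1 v = false) π2 → P (play P1 π1 π2 v))
    (hσ : IsStrat E (fun v => P1 v = false) σ) (i : ℕ) :
    Forces E P1 (fun ρ => P (fun l => if l < i then play P1 π1 σ v l else ρ (l - i)))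
      (play P1 π1 σ v i) := by
  refine ⟨_, hπ1.residual (playSeq P1 π1 σ v i).2, fun π2 hπ2 => ?_⟩
  let τ : List V → V → V := fun w x => if w.length < i then σ w x else π2 (w.drop i) x
  have hτ : IsStrat E (fun v => P1 v = false) τ := fun w x hx => by
    by_cases hw : w.length < i
    · simpa [τ, hw] using hσ w x hx
    · simpa [τ, hw] using hπ2 (w.drop i) x hx
  have hprefix : ∀ l ≤ i, playSeq P1 π1 τ v l = playSeq P1 π1 σ v l :=
    playSeq_congr P1 π1 τ v (fun _ _ => rfl) fun l hl => by
      simp [τ, length_playSeq_snd, hl]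
  have hresidual : residualStrat (playSeq P1 π1 τ v i).2 τ = π2 := by
    funext w x
    have hdrop := List.drop_left (l₁ := (playSeq P1 π1 τ v i).2) (l₂ := w)
    simp only [length_playSeq_snd] at hdrop
    simp [residualStrat, τ, length_playSeq_snd, hdrop]
  convert hwin τ hτ using 1
  funext l
  split_ifs with hl
  · exact congrArg Prod.fst (hprefix l hl.le).symm
  · obtain ⟨j, rfl⟩ := Nat.exists_eq_add_of_le (not_lt.1 hl)
    rw [play_add, hresidual]
    simp only [play, hprefix i le_rfl, Nat.add_sub_cancel_left]

def cpre (E : V → V → Prop) (P1 : V → Bool) (A : Set V) : Set V :=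
  {x | if P1 x then ∃ u, E x u ∧ u ∈ A else ∀ u, E x u → u ∈ A}

theorem cpre_mono {A B : Set V} (h : A ⊆ B) : cpre E P1 A ⊆ cpre E P1 B := by
  intro x hx
  simp only [cpre, mem_ofPred_eq] at hx ⊢
  split_ifs at hx ⊢
  · obtain ⟨u, hxu, hu⟩ := hx
    exact ⟨u, hxu, h hu⟩
  · exact fun u hxu => h (hx u hxu)

theorem IsStrat.prependStrat {owns : V → Prop} {first : V → V} {fam : V → List V → V → V}
    (hfirst : ∀ x, E x (first x)) (hfam : ∀ u, IsStrat E owns (fam u)) :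
    IsStrat E owns (prependStrat first fam) := by
  rintro (_ | ⟨_, w⟩) x hx
  exacts [hfirst x, hfam _ w x hx]

theorem exists_successor_choice (hE : ∀ v, ∃ u, E v u) (Q : V → Prop) :
    ∃ f : V → V, ∀ x, E x (f x) ∧ ((∃ u, E x u ∧ Q u) → Q (f x)) := by
  classical
  refine ⟨fun x => if hx : ∃ u, E x u ∧ Q u then hx.choose else (hE x).choose, fun x => ?_⟩
  by_cases hx : ∃ u, E x u ∧ Q u
  · simpa [hx] using hx.choose_spec
  · simpa [hx] using (hE x).choose_spec

/-- Player 1 moves to a successor from which `P` is forcible (player 2 can only move to such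
successors) and then plays the strategy forcing `P` from there. -/
theorem forces_tail_of_mem_cpre (hE : ∀ v, ∃ u, E v u) {P : (ℕ → V) → Prop} {v : V}
    (hv : v ∈ cpre E P1 {u | Forces E P1 P u}) :
    Forces E P1 (fun ρ => P (fun l => ρ (l + 1))) v := by
  have hfam : ∀ u, ∃ π, IsStrat E (fun v => P1 v = true) π ∧ (Forces E P1 P u →
      ∀ π2, IsStrat E (fun v => P1 v = false) π2 → P (play P1 π π2 u)) := by
    intro u
    by_cases hu : Forces E P1 P u
    · obtain ⟨π, hπ, hwin⟩ := hu
      exact ⟨π, hπ, fun _ => hwin⟩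
    · exact ⟨fun _ x => (hE x).choose, fun _ x _ => (hE x).choose_spec, (absurd · hu)⟩
  choose fam hfam hfam_win using hfam
  obtain ⟨first, hfirst⟩ := exists_successor_choice hE (Forces E P1 P)
  refine ⟨prependStrat first fam, .prependStrat (hfirst · |>.1) hfam, fun π2 hπ2 => ?_⟩
  have hu : Forces E P1 P (play P1 (prependStrat first fam) π2 v 1) := by
    show Forces E P1 P (if P1 v then first v else π2 [] v)
    simp only [cpre, mem_ofPred_eq] at hv
    cases hP : P1 v <;> simp only [hP, Bool.false_eq_true, ↓reduceIte] at hv ⊢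
    · exact hv _ (hπ2 [] v hP)
    · exact (hfirst v).2 hv
  show P fun l => play P1 _ π2 v (l + 1)
  rw [funext (play_prependStrat_succ P1 π2 v first fam)]
  exact hfam_win _ hu _ (hπ2.residual [v])

def attractor (E : V → V → Prop) (P1 : V → Bool) (T : Set V) (j : ℕ) : Set V :=
  (fun A => A ∪ cpre E P1 A)^[j] T

theorem attractor_succ (T : Set V) (j : ℕ) :
    attractor E P1 T (j + 1) = attractor E P1 T j ∪ cpre E P1 (attractor E P1 T j) :=
  iterate_succ_apply' _ j T

theorem subset_attractor (T : Set V) (j : ℕ) : T ⊆ attractor E P1 T j := by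
  induction j with
  | zero => rfl
  | succ j ih => exact attractor_succ T j ▸ ih.trans subset_union_left

theorem forces_of_mem_attractor (hE : ∀ v, ∃ u, E v u) {P : V → (ℕ → V) → Prop}
    {T : Set V} (hT : ∀ u ∈ T, Forces E P1 (P u) u) (j : ℕ) :
    ∀ v ∈ attractor E P1 T j,
      Forces E P1 (fun ρ => ∃ i ≤ j, P (ρ i) fun l => ρ (i + l)) v := by
  induction j with
  | zero => exact fun v hv => (hT v hv).mono fun ρ hρ h => ⟨0, le_rfl, by simpa [hρ] using h⟩
  | succ j ih =>
    intro v hv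
    rw [attractor_succ] at hv
    rcases hv with hv | hv
    · exact (ih v hv).mono fun ρ _ ⟨i, hi, h⟩ => ⟨i, by omega, h⟩
    · have hsub : attractor E P1 T j ⊆
          {u | Forces E P1 (fun ρ => ∃ i ≤ j, P (ρ i) fun l => ρ (i + l)) u} := ih
      refine (forces_tail_of_mem_cpre hE (cpre_mono hsub hv)).mono fun ρ _ ⟨i, hi, h⟩ =>
        ⟨i + 1, by omega, ?_⟩
      simpa [add_right_comm] using h

theorem cpre_attractor_card_subset [Fintype V] (T : Set V) :
    cpre E P1 (attractor E P1 T (Fintype.card V)) ⊆ attractor E P1 T (Fintype.card V) :=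
  fun x hx => iterate_subset_iterate_card (fun _ => subset_union_left) T (Fintype.card V + 1)
    (by rw [← attractor, attractor_succ]; exact Or.inr hx)

theorem exists_strat_avoid (hE : ∀ v, ∃ u, E v u) {A : Set V} (hA : cpre E P1 A ⊆ A) :
    ∃ π2, IsStrat E (fun v => P1 v = false) π2 ∧
      ∀ π1, IsStrat E (fun v => P1 v = true) π1 →
        ∀ v ∉ A, ∀ i, play P1 π1 π2 v i ∉ A := by
  obtain ⟨esc, hesc⟩ := exists_successor_choice hE (· ∉ A)
  refine ⟨fun _ x => esc x, fun _ x _ => (hesc x).1, fun π1 hπ1 v hv i => ?_⟩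
  induction i with
  | zero => exact hv
  | succ i ih =>
    have hcpre : play P1 π1 _ v i ∉ cpre E P1 A := fun h => ih (hA h)
    simp only [cpre, mem_ofPred_eq] at hcpre
    rw [play_succ]
    split_ifs at hcpre ⊢ with hP
    · exact fun h => hcpre ⟨_, hπ1 _ _ hP, h⟩
    · push Not at hcpre
      exact (hesc _).2 hcpre

end Game

section Coverage

variable {V AP : Type*} {E : V → V → Prop} {P1 : V → Bool} {L : V → Set AP}

def Covers (L : V → Set AP) (S : Set AP) (k : ℕ) (ρ : ℕ → V) : Prop :=
  k ≤ (S ∪ ⋃ i, L (ρ i)).ncard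

def CoversWithin (L : V → Set AP) (S : Set AP) (k N : ℕ) (ρ : ℕ → V) : Prop :=
  k ≤ (S ∪ ⋃ i ∈ Iic N, L (ρ i)).ncard

variable [Fintype V] [Finite AP]

/-- Along a winning play against a strategy of player 2 avoiding the attractor, the first
vertex with a label outside `S` would lie in the attractor. -/
theorem mem_attractor_of_forces (hE : ∀ v, ∃ u, E v u) {S : Set AP} {k : ℕ} {v : V}
    (hS : S.ncard < k) (hv : Forces E P1 (Covers L S k) v) :
    v ∈ attractor E P1 {u | ¬ L u ⊆ S ∧ Forces E P1 (Covers L S k) u} (Fintype.card V) := by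
  classical
  by_contra hvA
  obtain ⟨π2, hπ2, havoid⟩ := exists_strat_avoid hE (cpre_attractor_card_subset _)
  obtain ⟨π1, hπ1, hwin⟩ := hv
  have hnew : ∃ i, ¬ L (play P1 π1 π2 v i) ⊆ S := by
    by_contra! hold
    have : k ≤ (S ∪ ⋃ i, L (play P1 π1 π2 v i)).ncard := hwin π2 hπ2
    rw [union_eq_left.2 (iUnion_subset hold)] at this
    omega
  refine havoid π1 hπ1 v hvA (Nat.find hnew) (subset_attractor _ _ ⟨Nat.find_spec hnew, ?_⟩)
  refine (forces_of_prefix hπ1 hwin hπ2 _).mono fun ρ _ h =>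
    le_trans h (ncard_le_ncard (union_subset subset_union_left (iUnion_subset fun l => ?_)))
  dsimp only
  split_ifs with hl
  · exact (not_not.1 (Nat.find_min hnew hl)).trans subset_union_left
  · exact (subset_iUnion (fun i => L (ρ i)) _).trans subset_union_right

theorem forces_coversWithin (hE : ∀ v, ∃ u, E v u) {k : ℕ} (t : ℕ) (S : Set AP) (v : V)
    (hk : k ≤ S.ncard + t) (hv : Forces E P1 (Covers L S k) v) :
    Forces E P1 (CoversWithin L S k (t * Fintype.card V)) v := by
  induction t generalizing S v with
  | zero =>
    exact hv.mono fun ρ _ _ => le_trans (by omega) (ncard_le_ncard subset_union_left)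
  | succ t ih =>
    rcases le_or_gt k S.ncard with hkS | hS
    · exact hv.mono fun ρ _ _ => hkS.trans (ncard_le_ncard subset_union_left)
    have hT : ∀ u ∈ {u | ¬ L u ⊆ S ∧ Forces E P1 (Covers L S k) u},
        Forces E P1 (CoversWithin L (S ∪ L u) k (t * Fintype.card V)) u := by
      rintro u ⟨hnew, hu⟩
      have hgrow : S.ncard < (S ∪ L u).ncard := ncard_lt_ncard (ssubset_union_left_iff.2 hnew)
      refine ih (S ∪ L u) u (by omega) (hu.mono fun ρ _ h => le_trans h (ncard_le_ncard ?_))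
      exact union_subset_union_left _ subset_union_left
    refine (forces_of_mem_attractor hE hT _ v (mem_attractor_of_forces hE hS hv)).mono
      fun ρ _ ⟨i, hi, h⟩ => le_trans h (ncard_le_ncard ?_)
    have hlen : i + t * Fintype.card V ≤ (t + 1) * Fintype.card V := by
      rw [Nat.succ_mul]; omega
    have hmem : ∀ l ≤ (t + 1) * Fintype.card V, L (ρ l) ⊆
        S ∪ ⋃ l ∈ Iic ((t + 1) * Fintype.card V), L (ρ l) := fun l hl =>
      (subset_biUnion_of_mem (u := fun l => L (ρ l)) (mem_Iic.2 hl)).trans subset_union_right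
    refine union_subset (union_subset subset_union_left (hmem i (by omega))) ?_
    exact iUnion₂_subset fun l hl => hmem (i + l) (by rw [mem_Iic] at hl; omega)

end Coverage

theorem game_maximal_coverage_short_witness_general
    {V AP : Type*} [Fintype V] [Fintype AP]
    (E : V → V → Prop) (hE : ∀ v, ∃ u, E v u)
    (P1 : V → Bool) (vin : V) (L : V → Set AP)
    (m : ℕ)
    (h : ∃ π1, IsStrat E (fun v => P1 v = true) π1 ∧
      ∀ π2, IsStrat E (fun v => P1 v = false) π2 →
        m ≤ (⋃ i : ℕ, L (play P1 π1 π2 vin i)).ncard) :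
    ∃ π1', IsStrat E (fun v => P1 v = true) π1' ∧
      ∀ π2, IsStrat E (fun v => P1 v = false) π2 →
        m ≤ (⋃ i ∈ Set.Iic (m * Fintype.card V), L (play P1 π1' π2 vin i)).ncard := by
  have hcover := forces_coversWithin (P1 := P1) (L := L) (k := m) hE m ∅ vin (by simp)
    (by simpa only [Forces, Covers, empty_union] using h)
  simpa only [Forces, CoversWithin, empty_union] using hcover

/-- Let `G = ((V,E),(V_1,V_2), v_in, AP, L)` be a labeled game graph with `n = |V|`
vertices and `0 ≤ m ≤ |AP|`.  If there exists a player-1 strategy `π_1` such that for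
every player-2 strategy `π_2`, `|L(ω(v_in,π_1,π_2))| ≥ m`, then there exists a
player-1 strategy `π_1'` such that for every player-2 strategy `π_2`,
`|L(ω(v_in,π_1',π_2) ↾ m·n)| ≥ m`: at least `m` distinct propositions are visited
within the first `m·n` steps of the play. -/
theorem game_maximal_coverage_short_witness
    {V AP : Type*} [Fintype V] [Fintype AP]
    (E : V → V → Prop) (hE : ∀ v, ∃ u, E v u)
    (P1 : V → Bool) (vin : V) (L : V → Set AP)
    (m : ℕ) (hm : m ≤ Fintype.card AP)
    (h : ∃ π1, IsStrat E (fun v => P1 v = true) π1 ∧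
      ∀ π2, IsStrat E (fun v => P1 v = false) π2 →
        m ≤ (⋃ i : ℕ, L (play P1 π1 π2 vin i)).ncard) :
    ∃ π1', IsStrat E (fun v => P1 v = true) π1' ∧
      ∀ π2, IsStrat E (fun v => P1 v = false) π2 →
        m ≤ (⋃ i ∈ Set.Iic (m * Fintype.card V), L (play P1 π1' π2 vin i)).ncard :=
  game_maximal_coverage_short_witness_general E hE P1 vin L m h
end

section
/- For every vertex cover U of the graph G, there exists a player-2 strategy π_2 in the labeled game graph Ḡ such that for every player-1 strategy π_1, L(ω(v_in,π_1,π_2)) ⊆ U ∪ {$}; hence |L(ω(v_in,π_1,π_2))| ≤ |U| + 1 for every π_1. -/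
/-- `U` is a vertex cover of the undirected graph `G`: every edge of `G` has at
least one endpoint in `U`. -/
def IsVertexCover {V : Type*} (G : SimpleGraph V) (U : Set V) : Prop :=
  ∀ a b : V, G.Adj a b → a ∈ U ∨ b ∈ U

/-- The vertices of the labeled game graph `Ḡ` built from the undirected graph `G`:
the initial vertex `v_in` (`Sum.inl ()`), a vertex for each edge `e` of `G`
(`Sum.inr (Sum.inl e)`), and a vertex `(e,u)` for each edge `e` and endpoint `u` of
`e` (`Sum.inr (Sum.inr ...)`). -/
def BarV {V : Type*} (G : SimpleGraph V) : Type _ :=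
  Unit ⊕ (G.edgeSet ⊕ {p : Sym2 V × V // p.1 ∈ G.edgeSet ∧ p.2 ∈ p.1})

/-- The edges of `Ḡ`: from `v_in` to every edge-vertex, from each edge-vertex `e` to
the endpoint vertices `(e,u)` with `u ∈ e`, and from every endpoint vertex back to
`v_in`. -/
def BarE {V : Type*} (G : SimpleGraph V) : BarV G → BarV G → Prop
  | Sum.inl _, Sum.inr (Sum.inl _) => True
  | Sum.inr (Sum.inl e), Sum.inr (Sum.inr p) => p.val.1 = e.val
  | Sum.inr (Sum.inr _), Sum.inl _ => True
  | _, _ => False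

/-- The partition of the vertices of `Ḡ`: the edge-vertices belong to player 2 and
all other vertices belong to player 1. -/
def BarP1 {V : Type*} (G : SimpleGraph V) : BarV G → Bool
  | Sum.inr (Sum.inl _) => false
  | _ => true

/-- The labeling of `Ḡ` with propositions `AP = V ∪ {$}`, encoded as `Option V`
(with `none` playing the role of `$`): the initial vertex and the edge-vertices are
labeled `{$}`, and each endpoint vertex `(e,u)` is labeled `{u}`. -/
def BarL {V : Type*} (G : SimpleGraph V) : BarV G → Set (Option V)
  | Sum.inr (Sum.inr p) => {some p.val.2}
  | _ => {none}

/-- For every vertex cover `U` of the graph `G`, there exists a player-2 strategy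
`π_2` in the labeled game graph `Ḡ` such that for every player-1 strategy `π_1`,
`L(ω(v_in,π_1,π_2)) ⊆ U ∪ {$}`; hence `|L(ω(v_in,π_1,π_2))| ≤ |U| + 1` for every
`π_1`. -/
theorem vertex_cover_to_player2_strategy
    {V : Type*} [Fintype V] (G : SimpleGraph V) (hne : G.edgeSet.Nonempty)
    (U : Set V) (hU : IsVertexCover G U) :
    ∃ π2, IsStrat (BarE G) (fun v => BarP1 G v = false) π2 ∧
      ∀ π1, IsStrat (BarE G) (fun v => BarP1 G v = true) π1 →
        (⋃ i : ℕ, BarL G (play (BarP1 G) π1 π2 (Sum.inl ()) i)) ⊆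
            insert none (Option.some '' U) ∧
        (⋃ i : ℕ, BarL G (play (BarP1 G) π1 π2 (Sum.inl ()) i)).ncard ≤
            U.ncard + 1 := by
  classical
  have cov : ∀ e : G.edgeSet, ∃ u, u ∈ (e : Sym2 V) ∧ u ∈ U := by
    rintro ⟨s, hs⟩
    induction s using Sym2.ind with
    | _ a b =>
      rw [SimpleGraph.mem_edgeSet] at hs
      rcases hU a b hs with h | h
      · exact ⟨a, Sym2.mem_mk_left a b, h⟩
      · exact ⟨b, Sym2.mem_mk_right a b, h⟩
  set π2 : List (BarV G) → BarV G → BarV G := fun _ v =>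
    match v with
    | Sum.inr (Sum.inl e) =>
        Sum.inr (Sum.inr ⟨((e : Sym2 V), (cov e).choose), e.2, (cov e).choose_spec.1⟩)
    | _ => Sum.inl () with hπ2
  refine ⟨π2, ?_, ?_⟩
  · rintro w (v | e | p) hv
    · simp [BarP1] at hv
    · exact rfl
    · simp [BarP1] at hv
  intro π1 hπ1
  have good : ∀ i, (∃ u : Unit, play (BarP1 G) π1 π2 (Sum.inl ()) i = Sum.inl u) ∨
      (∃ e, play (BarP1 G) π1 π2 (Sum.inl ()) i = Sum.inr (Sum.inl e)) ∨
      (∃ p, play (BarP1 G) π1 π2 (Sum.inl ()) i = Sum.inr (Sum.inr p) ∧ p.val.2 ∈ U) := by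
    intro i
    induction i with
    | zero => exact Or.inl ⟨(), rfl⟩
    | succ n ih =>
      have hstep : play (BarP1 G) π1 π2 (Sum.inl ()) (n + 1) =
          (if BarP1 G (play (BarP1 G) π1 π2 (Sum.inl ()) n) then
            π1 (playSeq (BarP1 G) π1 π2 (Sum.inl ()) n).2 (play (BarP1 G) π1 π2 (Sum.inl ()) n)
          else
            π2 (playSeq (BarP1 G) π1 π2 (Sum.inl ()) n).2 (play (BarP1 G) π1 π2 (Sum.inl ()) n)) := rfl
      set w := (playSeq (BarP1 G) π1 π2 (Sum.inl ()) n).2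
      rcases ih with ⟨u, hu⟩ | ⟨e, he⟩ | ⟨p, hp, _⟩
      · have h1 := hπ1 w (Sum.inl u) rfl
        rw [hstep, hu]
        simp only [BarP1, if_true]
        rcases hx : π1 w (Sum.inl u) with x | e | p
        · rw [hx] at h1; exact absurd h1 (by simp [BarE])
        · exact Or.inr (Or.inl ⟨e, rfl⟩)
        · rw [hx] at h1; exact absurd h1 (by simp [BarE])
      · rw [hstep, he]
        simp only [BarP1, if_false, hπ2]
        exact Or.inr (Or.inr ⟨_, rfl, (cov e).choose_spec.2⟩)
      · have h1 := hπ1 w (Sum.inr (Sum.inr p)) rfl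
        rw [hstep, hp]
        simp only [BarP1, if_true]
        rcases hx : π1 w (Sum.inr (Sum.inr p)) with x | e | q
        · exact Or.inl ⟨x, rfl⟩
        · rw [hx] at h1; exact absurd h1 (by simp [BarE])
        · rw [hx] at h1; exact absurd h1 (by simp [BarE])
  have hsub : (⋃ i : ℕ, BarL G (play (BarP1 G) π1 π2 (Sum.inl ()) i)) ⊆
      insert none (Option.some '' U) := by
    intro x hx
    rcases Set.mem_iUnion.1 hx with ⟨i, hi⟩
    rcases good i with ⟨u, hu⟩ | ⟨e, he⟩ | ⟨p, hp, hpU⟩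
    · rw [hu] at hi; simp [BarL] at hi; simp [hi]
    · rw [he] at hi; simp [BarL] at hi; simp [hi]
    · rw [hp] at hi; simp [BarL] at hi
      exact Or.inr ⟨p.val.2, hpU, hi.symm⟩
  refine ⟨hsub, ?_⟩
  have hUfin : U.Finite := Set.toFinite U
  have hfin : (insert none (Option.some '' U)).Finite := (hUfin.image _).insert none
  calc (⋃ i : ℕ, BarL G (play (BarP1 G) π1 π2 (Sum.inl ()) i)).ncard
      ≤ (insert none (Option.some '' U)).ncard := Set.ncard_le_ncard hsub hfin
    _ ≤ (Option.some '' U).ncard + 1 := Set.ncard_insert_le _ _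
    _ = U.ncard + 1 := by rw [Set.ncard_image_of_injective U (Option.some_injective V)]
end

section
/- Player 1 wins the reachability game on the product game graph G' with target set T = {(v,b) : |b| ≥ m} — that is, there exists a player-1 strategy π_1' in G' such that for every player-2 strategy π_2' the play ω(v'_in, π_1', π_2') visits some vertex of T — if and only if there exists a player-1 strategy π_1 in G such that for every player-2 strategy π_2, |L(ω(v_in,π_1,π_2))| ≥ m. -/
/-- The edge relation of the product game graph `G'` with vertices
`V' = V × 2^AP`: there is an edge from `(v,b)` to `(v',b')` iff `(v,v') ∈ E` and
`b' = b ∪ L(v')`. -/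
def ProdE {V AP : Type*} (E : V → V → Prop) (L : V → Set AP) :
    V × Set AP → V × Set AP → Prop :=
  fun p q => E p.1 q.1 ∧ q.2 = p.2 ∪ L q.1

/-- The partition of the product game graph `G'`: `(v,b)` belongs to player `i` iff
`v` does. -/
def ProdP1 {V AP : Type*} (P1 : V → Bool) : V × Set AP → Bool :=
  fun p => P1 p.1

/-- accumulated label set along a history -/
def accU {V AP : Type*} (L : V → Set AP) (b : Set AP) (w : List V) : Set AP :=
  w.foldl (fun s v => s ∪ L v) b

/-- lifted history -/
def lhL {V AP : Type*} (L : V → Set AP) : Set AP → List V → List (V × Set AP)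
  | _, [] => []
  | b, v :: t => (v, b ∪ L v) :: lhL L (b ∪ L v) t

lemma accU_append {V AP : Type*} (L : V → Set AP) (b : Set AP) (w : List V) (v : V) :
    accU L b (w ++ [v]) = accU L b w ∪ L v := by
  simp [accU]

lemma lhL_map_fst {V AP : Type*} (L : V → Set AP) (b : Set AP) (w : List V) :
    (lhL L b w).map Prod.fst = w := by
  induction w generalizing b with
  | nil => rfl
  | cons v t ih => simp [lhL, ih]

lemma lhL_append {V AP : Type*} (L : V → Set AP) (b : Set AP) (w : List V) (v : V) :
    lhL L b (w ++ [v]) = lhL L b w ++ [(v, accU L b w ∪ L v)] := by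
  induction w generalizing b with
  | nil => simp [lhL, accU]
  | cons u t ih => simp [lhL, ih, accU, List.foldl_cons]

lemma accU_eq {V AP : Type*} (L : V → Set AP) (b : Set AP) (w : List V) :
    accU L b w = b ∪ ⋃ u ∈ w, L u := by
  induction w generalizing b with
  | nil => simp [accU]
  | cons v t ih =>
      simp only [accU, List.foldl_cons] at *
      rw [ih]
      ext a
      simp
      tauto

lemma playSeq_snd {V : Type*} (P1 : V → Bool) (π1 π2 : List V → V → V) (v : V) (i : ℕ) :
    (playSeq P1 π1 π2 v i).2 = (List.range i).map (play P1 π1 π2 v) := by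
  induction i with
  | zero => rfl
  | succ i ih => simp [playSeq, ih, List.range_succ, play]

lemma prod_play_inv {V AP : Type*} (P1 : V → Bool) (L : V → Set AP)
    (π1 π2 : List V → V → V) (π1' π2' : List (V × Set AP) → V × Set AP → V × Set AP)
    (vin : V)
    (H1 : ∀ w v, P1 v = true →
      π1' (lhL L ∅ w) (v, accU L ∅ w ∪ L v) = (π1 w v, (accU L ∅ w ∪ L v) ∪ L (π1 w v)))
    (H2 : ∀ w v, P1 v = false →
      π2' (lhL L ∅ w) (v, accU L ∅ w ∪ L v) = (π2 w v, (accU L ∅ w ∪ L v) ∪ L (π2 w v))) :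
    ∀ i, playSeq (ProdP1 P1) π1' π2' (vin, L vin) i =
      ((play P1 π1 π2 vin i,
        accU L ∅ (playSeq P1 π1 π2 vin i).2 ∪ L (play P1 π1 π2 vin i)),
        lhL L ∅ (playSeq P1 π1 π2 vin i).2) := by
  intro i
  induction i with
  | zero => simp [playSeq, play, accU, lhL]
  | succ i ih =>
      set p := playSeq P1 π1 π2 vin i with hp
      have hps : playSeq P1 π1 π2 vin (i+1) =
          (if P1 p.1 then π1 p.2 p.1 else π2 p.2 p.1, p.2 ++ [p.1]) := rfl
      have hps' : playSeq (ProdP1 P1) π1' π2' (vin, L vin) (i+1) =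
          (if ProdP1 P1 (playSeq (ProdP1 P1) π1' π2' (vin, L vin) i).1
            then π1' (playSeq (ProdP1 P1) π1' π2' (vin, L vin) i).2
                 (playSeq (ProdP1 P1) π1' π2' (vin, L vin) i).1
            else π2' (playSeq (ProdP1 P1) π1' π2' (vin, L vin) i).2
                 (playSeq (ProdP1 P1) π1' π2' (vin, L vin) i).1,
           (playSeq (ProdP1 P1) π1' π2' (vin, L vin) i).2 ++
             [(playSeq (ProdP1 P1) π1' π2' (vin, L vin) i).1]) := rfl
      rw [hps', ih]
      have hplay : play P1 π1 π2 vin i = p.1 := rfl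
      by_cases h : P1 p.1 = true
      · simp only [ProdP1, hplay, h, if_true]
        rw [H1 p.2 p.1 h]
        rw [hps]
        simp [play, h, lhL_append, accU_append, hplay, hps]
      · have h' : P1 p.1 = false := by simpa using h
        simp only [ProdP1, hplay, h', if_false, Bool.false_eq_true]
        rw [H2 p.2 p.1 h']
        rw [hps]
        simp [play, h', lhL_append, accU_append, hplay, hps]


/-- Player 1 wins the reachability game on the product game graph `G'` with target
set `T = {(v,b) : |b| ≥ m}` — i.e. there is a player-1 strategy `π_1'` in `G'` such
that against every player-2 strategy `π_2'` the play from `v'_in = (v_in, L(v_in))`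
visits some vertex of `T` — if and only if there exists a player-1 strategy `π_1` in
`G` such that for every player-2 strategy `π_2`, `|L(ω(v_in,π_1,π_2))| ≥ m`. -/
theorem product_reachability_iff_maximal_coverage
    {V AP : Type*} [Fintype V] [Fintype AP]
    (E : V → V → Prop) (hE : ∀ v, ∃ u, E v u)
    (P1 : V → Bool) (vin : V) (L : V → Set AP) (m : ℕ) :
    (∃ π1', IsStrat (ProdE E L) (fun p => ProdP1 P1 p = true) π1' ∧
        ∀ π2', IsStrat (ProdE E L) (fun p => ProdP1 P1 p = false) π2' →
          ∃ i : ℕ,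
            m ≤ (play (ProdP1 P1) π1' π2' (vin, L vin) i).2.ncard) ↔
      (∃ π1, IsStrat E (fun v => P1 v = true) π1 ∧
        ∀ π2, IsStrat E (fun v => P1 v = false) π2 →
          m ≤ (⋃ i : ℕ, L (play P1 π1 π2 vin i)).ncard) := by
  constructor
  · rintro ⟨π1', hs1', hwin⟩
    refine ⟨fun w v => (π1' (lhL L ∅ w) (v, accU L ∅ w ∪ L v)).1, ?_, ?_⟩
    · intro w v hv
      exact (hs1' (lhL L ∅ w) (v, accU L ∅ w ∪ L v) hv).1
    · intro π2 hs2
      set π1 : List V → V → V := fun w v => (π1' (lhL L ∅ w) (v, accU L ∅ w ∪ L v)).1 with hπ1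
      set π2' : List (V × Set AP) → V × Set AP → V × Set AP :=
        fun w' p => (π2 (w'.map Prod.fst) p.1, p.2 ∪ L (π2 (w'.map Prod.fst) p.1)) with hπ2'
      have hs2' : IsStrat (ProdE E L) (fun p => ProdP1 P1 p = false) π2' := by
        intro w' p hp
        exact ⟨hs2 (w'.map Prod.fst) p.1 hp, rfl⟩
      have H1 : ∀ w v, P1 v = true →
          π1' (lhL L ∅ w) (v, accU L ∅ w ∪ L v) =
            (π1 w v, (accU L ∅ w ∪ L v) ∪ L (π1 w v)) := by
        intro w v hv
        have := (hs1' (lhL L ∅ w) (v, accU L ∅ w ∪ L v) hv).2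
        exact Prod.ext rfl this
      have H2 : ∀ w v, P1 v = false →
          π2' (lhL L ∅ w) (v, accU L ∅ w ∪ L v) =
            (π2 w v, (accU L ∅ w ∪ L v) ∪ L (π2 w v)) := by
        intro w v hv
        simp [hπ2', lhL_map_fst]
      obtain ⟨i, hi⟩ := hwin π2' hs2'
      have hinv := prod_play_inv P1 L π1 π2 π1' π2' vin H1 H2 i
      have hb : (play (ProdP1 P1) π1' π2' (vin, L vin) i).2 =
          accU L ∅ (playSeq P1 π1 π2 vin i).2 ∪ L (play P1 π1 π2 vin i) := by
        rw [play, hinv]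
      rw [hb] at hi
      refine le_trans hi (Set.ncard_le_ncard ?_ (Set.toFinite _))
      rw [accU_eq, playSeq_snd]
      rintro a (⟨ha | ha⟩ | ha)
      · exact absurd ha (Set.notMem_empty a)
      · simp only [Set.mem_iUnion, List.mem_map, List.mem_range] at ha
        obtain ⟨u, ⟨j, _, rfl⟩, hu⟩ := ha
        exact Set.mem_iUnion.2 ⟨j, hu⟩
      · exact Set.mem_iUnion.2 ⟨i, ha⟩
  · rintro ⟨π1, hs1, hwin⟩
    set π1' : List (V × Set AP) → V × Set AP → V × Set AP :=
      fun w' p => (π1 (w'.map Prod.fst) p.1, p.2 ∪ L (π1 (w'.map Prod.fst) p.1)) with hπ1'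
    refine ⟨π1', ?_, ?_⟩
    · intro w' p hp
      exact ⟨hs1 (w'.map Prod.fst) p.1 hp, rfl⟩
    · intro π2' hs2'
      set π2 : List V → V → V := fun w v => (π2' (lhL L ∅ w) (v, accU L ∅ w ∪ L v)).1 with hπ2
      have hs2 : IsStrat E (fun v => P1 v = false) π2 := by
        intro w v hv
        exact (hs2' (lhL L ∅ w) (v, accU L ∅ w ∪ L v) hv).1
      have H1 : ∀ w v, P1 v = true →
          π1' (lhL L ∅ w) (v, accU L ∅ w ∪ L v) =
            (π1 w v, (accU L ∅ w ∪ L v) ∪ L (π1 w v)) := by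
        intro w v hv
        simp [hπ1', lhL_map_fst]
      have H2 : ∀ w v, P1 v = false →
          π2' (lhL L ∅ w) (v, accU L ∅ w ∪ L v) =
            (π2 w v, (accU L ∅ w ∪ L v) ∪ L (π2 w v)) := by
        intro w v hv
        have := (hs2' (lhL L ∅ w) (v, accU L ∅ w ∪ L v) hv).2
        exact Prod.ext rfl this
      have hS := hwin π2 hs2
      set S := ⋃ i : ℕ, L (play P1 π1 π2 vin i) with hSdef
      classical
      set f : AP → ℕ := fun a => if h : a ∈ S then (Set.mem_iUnion.1 h).choose else 0 with hf
      set N := Finset.univ.sup f with hN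
      refine ⟨N, ?_⟩
      have hinv := prod_play_inv P1 L π1 π2 π1' π2' vin H1 H2 N
      have hb : (play (ProdP1 P1) π1' π2' (vin, L vin) N).2 =
          accU L ∅ (playSeq P1 π1 π2 vin N).2 ∪ L (play P1 π1 π2 vin N) := by
        rw [play, hinv]
      rw [hb]
      refine le_trans hS (Set.ncard_le_ncard ?_ (Set.toFinite _))
      intro a ha
      have hfa : a ∈ L (play P1 π1 π2 vin (f a)) := by
        have h := Set.mem_iUnion.1 ha
        simp only [hf, dif_pos ha]
        exact h.choose_spec
      have hle : f a ≤ N := Finset.le_sup (Finset.mem_univ a)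
      rw [accU_eq, playSeq_snd]
      rcases lt_or_eq_of_le hle with hlt | heq
      · left; right
        simp only [Set.mem_iUnion, List.mem_map, List.mem_range]
        exact ⟨play P1 π1 π2 vin (f a), ⟨f a, hlt, rfl⟩, hfa⟩
      · right; rw [← heq]; exact hfa
end
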